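/- arXiv:1809.00142 — 6 statements merged into one kernel-verified Lean document; each statement's English description precedes it below -/
import Mathlib

section
/- For every digraph D, the set P = {p ∈ ℝ : p ≥ 1 and D admits an acyclic p-colouring} is a closed subset of ℝ. Consequently, every loopless digraph D admits an acyclic χ⃗*(D)-colouring, i.e. the infimum defining χ⃗*(D) is attained. -/
open Finset

variable {V : Type*}

/-- `v :: l` forms a directed cycle of the digraph with arc relation `E`:
the vertices are pairwise distinct and each one has an arc to the next, cyclically. -/
def IsDicycle (E : V → V → Prop) (v : V) (l : List V) : Prop :=
  (v :: l).Nodup ∧ List.Chain E v (l ++ [v])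

/-- The vertex set `A` induces an acyclic subdigraph of the digraph `E`:
no directed cycle of `E` has all of its vertices in `A`. -/
def AcyclicOn (E : V → V → Prop) (A : Set V) : Prop :=
  ∀ v l, IsDicycle E v l → ¬ (∀ x ∈ v :: l, x ∈ A)

/-- The open arc of length 1 in `ℝ/pℤ` starting at (the image of) `a`. -/
def unitArc (p a : ℝ) : Set (AddCircle p) :=
  (fun x : ℝ => (x : AddCircle p)) '' Set.Ioo a (a + 1)

/-- An acyclic `p`-colouring of the digraph `E` : the preimage of every open arc
of length 1 induces an acyclic subdigraph. -/
def IsAcyclicColouring (E : V → V → Prop) (p : ℝ) (c : V → AddCircle p) : Prop :=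
  ∀ a : ℝ, AcyclicOn E (c ⁻¹' unitArc p a)

/-- The star dichromatic number of a digraph. -/
noncomputable def starDichromatic (E : V → V → Prop) : ℝ :=
  sInf {p : ℝ | 1 ≤ p ∧ ∃ c : V → AddCircle p, IsAcyclicColouring E p c}

/-- A weak circular `p`-colouring in the sense of Bokal et al. -/
def IsWeakCircularColouring (E : V → V → Prop) (p : ℝ) (c : V → AddCircle p) : Prop :=
  (∀ u w, E u w → c u = c w ∨
    ∃ r : ℝ, r ∈ Set.Ico (0 : ℝ) p ∧ (r : AddCircle p) = c w - c u ∧ 1 ≤ r) ∧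
  ∀ t : AddCircle p, AcyclicOn E (c ⁻¹' {t})

/-- The circular dichromatic number of a digraph. -/
noncomputable def circularDichromatic (E : V → V → Prop) : ℝ :=
  sInf {p : ℝ | 1 ≤ p ∧ ∃ c : V → AddCircle p, IsWeakCircularColouring E p c}

/-- The fractional dichromatic number: the optimal value of the covering linear
program over the acyclic vertex subsets. -/
noncomputable def fracDichromatic [Fintype V] [DecidableEq V] (E : V → V → Prop) : ℝ :=
  sInf {r : ℝ | ∃ x : Finset V → ℝ, (∀ A, 0 ≤ x A) ∧
    (∀ A : Finset V, x A ≠ 0 → AcyclicOn E ↑A) ∧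
    (∀ v : V, 1 ≤ ∑ A ∈ Finset.univ.filter (fun A : Finset V => v ∈ A), x A) ∧
    r = ∑ A : Finset V, x A}

/-- The cyclic interval `{i, i+1, ..., i+d-1}` in `ℤ/kℤ`. -/
def cycInterval (k : ℕ) (i : ZMod k) (d : ℕ) : Set (ZMod k) :=
  {j : ZMod k | ∃ t : ℕ, t < d ∧ j = i + (t : ZMod k)}

/-- An acyclic `(k,d)`-colouring of the digraph `E`. -/
def IsAcyclicKDColouring (E : V → V → Prop) (k d : ℕ) (c : V → ZMod k) : Prop :=
  ∀ i : ZMod k, AcyclicOn E (c ⁻¹' cycInterval k i d)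

/-- The dichromatic number: the least `k` such that the vertex set can be partitioned
into `k` classes each inducing an acyclic subdigraph. -/
noncomputable def dichromatic (E : V → V → Prop) : ℕ :=
  sInf {k : ℕ | ∃ c : V → Fin k, ∀ i : Fin k, AcyclicOn E (c ⁻¹' {i})}

/-- `v :: l` forms a cycle of the simple graph `G` (of length at least 3). -/
def IsGraphCycle (G : SimpleGraph V) (v : V) (l : List V) : Prop :=
  3 ≤ (v :: l).length ∧ (v :: l).Nodup ∧ List.Chain G.Adj v (l ++ [v])

/-- The vertex set `A` induces a forest (acyclic subgraph) in the simple graph `G`. -/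
def ForestOn (G : SimpleGraph V) (A : Set V) : Prop :=
  ∀ v l, IsGraphCycle G v l → ¬ (∀ x ∈ v :: l, x ∈ A)

/-- A `(k,d)`-tree-colouring of a graph. -/
def IsTreeColouring (G : SimpleGraph V) (k d : ℕ) (c : V → ZMod k) : Prop :=
  ∀ i : ZMod k, ForestOn G (c ⁻¹' cycInterval k i d)

/-- The circular vertex arboricity of a graph. -/
noncomputable def circularVertexArboricity (G : SimpleGraph V) : ℝ :=
  sInf {r : ℝ | ∃ k d : ℕ, 1 ≤ d ∧ d ≤ k ∧
    (∃ c : V → ZMod k, IsTreeColouring G k d c) ∧ r = (k : ℝ) / d}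

/-- `E` is an orientation of the simple graph `G`: for each edge exactly one of the
two possible arcs is present, and there are no other arcs. -/
def IsOrientation (G : SimpleGraph V) (E : V → V → Prop) : Prop :=
  ∀ u w, ((E u w ∨ E w u) ↔ G.Adj u w) ∧ ¬ (E u w ∧ E w u)

/-- The star dichromatic number of a graph: the maximum over all orientations. -/
noncomputable def starDichromaticGraph (G : SimpleGraph V) : ℝ :=
  sSup {r : ℝ | ∃ E : V → V → Prop, IsOrientation G E ∧ r = starDichromatic E}

/-- The fractional dichromatic number of a graph: the maximum over all orientations. -/
noncomputable def fracDichromaticGraph [Fintype V] [DecidableEq V] (G : SimpleGraph V) : ℝ :=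
  sSup {r : ℝ | ∃ E : V → V → Prop, IsOrientation G E ∧ r = fracDichromatic E}

/-- The fractional chromatic number of a graph: the optimal value of the covering
linear program over the independent vertex subsets. -/
noncomputable def fractionalChromatic [Fintype V] [DecidableEq V] (G : SimpleGraph V) : ℝ :=
  sInf {r : ℝ | ∃ x : Finset V → ℝ, (∀ A, 0 ≤ x A) ∧
    (∀ A : Finset V, x A ≠ 0 → ∀ u ∈ A, ∀ w ∈ A, ¬ G.Adj u w) ∧
    (∀ v : V, 1 ≤ ∑ A ∈ Finset.univ.filter (fun A : Finset V => v ∈ A), x A) ∧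
    r = ∑ A : Finset V, x A}

/-- A `(k,d)`-colouring of a graph in the sense of Vince: colours of adjacent vertices
have circular `k`-distance at least `d`. -/
def IsVinceColouring (G : SimpleGraph V) (k d : ℕ) (c : V → ZMod k) : Prop :=
  ∀ u w, G.Adj u w → d ≤ (c u - c w).val ∧ d ≤ (c w - c u).val

/-- Vince's star (circular) chromatic number of a graph. -/
noncomputable def starChromatic (G : SimpleGraph V) : ℝ :=
  sInf {r : ℝ | ∃ k d : ℕ, 1 ≤ d ∧ d ≤ k ∧
    (∃ c : V → ZMod k, IsVinceColouring G k d c) ∧ r = (k : ℝ) / d}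

/-- The circulant digraph `C⃗(k,d)` on `ℤ/kℤ`: each vertex `i` has the outgoing arcs
`(i, i+d), (i, i+d+1), …, (i, i+k-1)`. -/
def circulantDigraph (k d : ℕ) : ZMod k → ZMod k → Prop :=
  fun i j => ∃ t : ℕ, d ≤ t ∧ t < k ∧ j = i + (t : ZMod k)

/-- The directed cycle `C⃗_n` on `ℤ/nℤ`. -/
def dirCycle (n : ℕ) : ZMod n → ZMod n → Prop :=
  fun i j => j = i + 1

/-- The digraph `D^s` obtained from `D` by adding a dominating source `none`. -/
def addSource (E : V → V → Prop) : Option V → Option V → Prop :=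
  fun a b => match a, b with
  | none, some _ => True
  | some u, some w => E u w
  | _, none => False

/-- The wheel graph `W_k`: a cycle on `ℤ/kℤ` together with a hub `none` adjacent to
every cycle vertex. -/
def wheelGraph (k : ℕ) : SimpleGraph (Option (ZMod k)) :=
  SimpleGraph.fromRel (fun a b => match a, b with
    | none, some _ => True
    | some i, some j => j = i + 1
    | _, none => False)

/-!
A colouring fails to be acyclic only if some directed cycle lies in some open arc, and for a
fixed cycle and arc this is an open condition on the period `p` and on real representatives of
the colours. Writing the colours as `p * t` with `t ∈ [0,1]^V`, the set of admissible `p` is the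
projection of a closed subset of `ℝ × [0,1]^V`, hence closed since `[0,1]^V` is compact. For a
finite loopless digraph, distinct integer colours with period `|V| + 1` put at most one vertex in
each arc, so this closed set, bounded below by `1`, is nonempty and contains its infimum.
-/

open Set

lemma coe_mem_unitArc_iff {p a x : ℝ} :
    (x : AddCircle p) ∈ unitArc p a ↔ ∃ k : ℤ, x - k * p ∈ Ioo a (a + 1) := by
  simp only [unitArc, mem_image, QuotientAddGroup.eq, AddSubgroup.mem_zmultiples_iff, zsmul_eq_mul]
  constructor
  · rintro ⟨y, hy, k, hk⟩
    exact ⟨k, by rwa [show x - k * p = y by linarith]⟩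
  · rintro ⟨k, hk⟩
    exact ⟨_, hk, k, by ring⟩

lemma exists_coe_mul_unitInterval_eq {p : ℝ} (hp : 0 < p) (c : AddCircle p) :
    ∃ t : unitInterval, ((p * t : ℝ) : AddCircle p) = c := by
  have := Fact.mk hp
  obtain ⟨x, rfl⟩ := QuotientAddGroup.mk_surjective c
  refine ⟨⟨Int.fract (x / p), Int.fract_nonneg _, (Int.fract_lt_one _).le⟩, ?_⟩
  rw [mul_comm, ← AddCircle.coe_equivIco_mk_apply, AddCircle.coe_equivIco]

lemma isOpen_setOf_coe_mem_unitArc {X : Type*} [TopologicalSpace X] {p x : X → ℝ}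
    (hp : Continuous p) (hx : Continuous x) (a : ℝ) :
    IsOpen {z | (x z : AddCircle (p z)) ∈ unitArc (p z) a} := by
  simp only [coe_mem_unitArc_iff, ofPred_exists]
  exact isOpen_iUnion fun k => isOpen_Ioo.preimage (hx.sub (continuous_const.mul hp))

lemma isClosed_setOf_isAcyclicColouring {X : Type*} [TopologicalSpace X] (E : V → V → Prop)
    {p : X → ℝ} {x : X → V → ℝ} (hp : Continuous p) (hx : Continuous x) :
    IsClosed {z | IsAcyclicColouring E (p z) fun v => (x z v : AddCircle (p z))} := by
  rw [← isOpen_compl_iff, compl_ofPred]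
  simp only [IsAcyclicColouring, AcyclicOn, not_forall, ofPred_exists]
  refine isOpen_iUnion fun a => isOpen_iUnion fun v => isOpen_iUnion fun l =>
    isOpen_iUnion fun _ => ?_
  convert (v :: l).finite_toSet.isOpen_biInter fun w _ =>
    isOpen_setOf_coe_mem_unitArc hp ((continuous_apply w).comp hx) a
  ext
  simp

theorem isClosed_setOf_exists_isAcyclicColouring (E : V → V → Prop) :
    IsClosed {p : ℝ | 1 ≤ p ∧ ∃ c : V → AddCircle p, IsAcyclicColouring E p c} := by
  have hrep : {p : ℝ | 1 ≤ p ∧ ∃ c : V → AddCircle p, IsAcyclicColouring E p c} =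
      Prod.fst '' {q : ℝ × (V → unitInterval) |
        1 ≤ q.1 ∧ IsAcyclicColouring E q.1 fun v => ((q.1 * q.2 v : ℝ) : AddCircle q.1)} := by
    ext p
    constructor
    · rintro ⟨hp, c, hc⟩
      choose t ht using fun v => exists_coe_mul_unitInterval_eq (by linarith) (c v)
      exact ⟨(p, t), ⟨hp, by simpa only [ht]⟩, rfl⟩
    · rintro ⟨q, ⟨hq, hc⟩, rfl⟩
      exact ⟨hq, _, hc⟩
  rw [hrep]
  refine isClosedMap_fst_of_compactSpace _
    ((isClosed_le continuous_const continuous_fst).inter ?_)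
  exact isClosed_setOf_isAcyclicColouring E continuous_fst
    (continuous_pi fun v => continuous_fst.mul (continuous_subtype_val.comp
      ((continuous_apply v).comp continuous_snd)))

lemma acyclicOn_of_subsingleton {E : V → V → Prop} (hE : ∀ v, ¬ E v v) {A : Set V}
    (hA : A.Subsingleton) : AcyclicOn E A := by
  rintro v (_ | ⟨w, l⟩) ⟨hnd, hch⟩ hall
  · exact hE v (List.isChain_cons_cons.mp hch).1
  · refine (List.nodup_cons.mp hnd).1 ?_
    rw [hA (hall v (by simp)) (hall w (by simp))]
    exact List.mem_cons_self

lemma eq_of_natCast_mem_unitArc {p m n : ℕ} {a : ℝ} (hm : m < p) (hn : n < p)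
    (hma : ((m : ℝ) : AddCircle (p : ℝ)) ∈ unitArc p a)
    (hna : ((n : ℝ) : AddCircle (p : ℝ)) ∈ unitArc p a) : m = n := by
  obtain ⟨k, hk⟩ := coe_mem_unitArc_iff.mp hma
  obtain ⟨l, hl⟩ := coe_mem_unitArc_iff.mp hna
  have hreal : |((m - n - (k - l) * p : ℤ) : ℝ)| < 1 := by
    push_cast
    rw [abs_lt]
    constructor <;> linarith [hk.1, hk.2, hl.1, hl.2]
  have hint : (m - n - (k - l) * p : ℤ) = 0 := Int.abs_lt_one_iff.mp (by exact_mod_cast hreal)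
  have := Int.eq_zero_of_abs_lt_dvd (m := p) (x := m - n) ⟨k - l, by linarith⟩
    (by rw [abs_lt]; omega)
  omega

lemma exists_isAcyclicColouring_of_loopless [Fintype V] {E : V → V → Prop}
    (hE : ∀ v, ¬ E v v) :
    ∃ c : V → AddCircle ((Fintype.card V + 1 : ℕ) : ℝ), IsAcyclicColouring E _ c := by
  refine ⟨fun v => ((Fintype.equivFin V v : ℕ) : ℝ), fun a => acyclicOn_of_subsingleton hE ?_⟩
  intro u hu w hw
  have hlt : ∀ x, (Fintype.equivFin V x : ℕ) < Fintype.card V + 1 := fun x =>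
    (Fintype.equivFin V x).isLt.trans (Nat.lt_succ_self _)
  exact (Fintype.equivFin V).injective <| Fin.ext <| eq_of_natCast_mem_unitArc (hlt u) (hlt w) hu hw

theorem stmt0_general {V : Type*} [Fintype V] (E : V → V → Prop) :
    IsClosed {p : ℝ | 1 ≤ p ∧ ∃ c : V → AddCircle p, IsAcyclicColouring E p c} ∧
    ((∀ v, ¬ E v v) →
      ∃ c : V → AddCircle (starDichromatic E),
        IsAcyclicColouring E (starDichromatic E) c) := by
  have hclosed := isClosed_setOf_exists_isAcyclicColouring E
  refine ⟨hclosed, fun hE => ?_⟩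
  have hne : {p : ℝ | 1 ≤ p ∧ ∃ c : V → AddCircle p, IsAcyclicColouring E p c}.Nonempty :=
    ⟨_, by simp, exists_isAcyclicColouring_of_loopless hE⟩
  exact (hclosed.csInf_mem hne ⟨1, fun p hp => hp.1⟩).2

/-- The set of `p ≥ 1` admitting an acyclic `p`-colouring is closed;
consequently every loopless digraph admits an acyclic `χ⃗*(D)`-colouring. -/
theorem stmt0 {V : Type*} [Fintype V] [Nonempty V] (E : V → V → Prop) :
    IsClosed {p : ℝ | 1 ≤ p ∧ ∃ c : V → AddCircle p, IsAcyclicColouring E p c} ∧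
    ((∀ v, ¬ E v v) →
      ∃ c : V → AddCircle (starDichromatic E),
        IsAcyclicColouring E (starDichromatic E) c) :=
  stmt0_general E
end

section
/- Let D be a digraph and p ≥ 1 a real number. Then D admits an acyclic p-colouring if and only if D admits an acyclic (k,d)-colouring for every pair of natural numbers (k,d) with k ≥ d ≥ 1 and k/d ≥ p. Consequently, χ⃗*(D) = inf{ k/d : (k,d) ∈ ℕ², k ≥ d ≥ 1, and D admits an acyclic (k,d)-colouring }. -/
open Finset

variable {V : Type*}

lemma myCoeEq (p x y : ℝ) : (x : AddCircle p) = (y : AddCircle p) ↔ ∃ n : ℤ, x = y + n * p := by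
  rw [← sub_eq_zero (b := (y : AddCircle p))]
  have : (x : AddCircle p) - y = ((x - y : ℝ) : AddCircle p) := (AddCircle.coe_sub p x y).symm
  rw [this, AddCircle.coe_eq_zero_iff]
  constructor
  · rintro ⟨n, hn⟩; exact ⟨n, by rw [zsmul_eq_mul] at hn; linarith⟩
  · rintro ⟨n, hn⟩; exact ⟨n, by rw [zsmul_eq_mul]; linarith⟩

lemma myLift {p : ℝ} (hp : 0 < p) (c : AddCircle p) :
    ∃ y : ℝ, y ∈ Set.Ico (0:ℝ) p ∧ (y : AddCircle p) = c := by
  obtain ⟨x, rfl⟩ := QuotientAddGroup.mk_surjective c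
  refine ⟨toIcoMod hp 0 x, by simpa using toIcoMod_mem_Ico hp 0 x, ?_⟩
  rw [show ((toIcoMod hp 0 x : ℝ) : AddCircle p) = _ from rfl]
  rw [myCoeEq]
  exact ⟨-(toIcoDiv hp 0 x), by rw [toIcoMod, zsmul_eq_mul]; push_cast; ring⟩


lemma real_of_kd (E : V → V → Prop) {k d : ℕ} (hd : 1 ≤ d) (hdk : d ≤ k) {p : ℝ}
    (hpk : (k : ℝ) / d ≤ p) (c' : V → ZMod k) (hc' : IsAcyclicKDColouring E k d c') :
    ∃ c : V → AddCircle p, IsAcyclicColouring E p c := by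
  haveI : NeZero k := ⟨by omega⟩
  have hk : 0 < (k : ℝ) := by exact_mod_cast Nat.pos_of_ne_zero (by omega)
  have hdR : 0 < (d : ℝ) := by exact_mod_cast hd
  have hp : 0 < p := lt_of_lt_of_le (by positivity) hpk
  have hkp : (k : ℝ) / p ≤ d := by
    rw [div_le_iff₀ hp]
    calc (k:ℝ) ≤ p * d := by rw [div_le_iff₀ hdR] at hpk; linarith
    _ = d * p := by ring
  refine ⟨fun v => (((c' v).val * p / k : ℝ) : AddCircle p), ?_⟩
  intro a v l hcyc hall
  set β : ℝ := a * k / p with hβ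
  refine hc' ((⌊β⌋ + 1 : ℤ) : ZMod k) v l hcyc ?_
  intro x hx
  have hx' := hall x hx
  simp only [Set.mem_preimage, unitArc, Set.mem_image] at hx'
  obtain ⟨y, hy, hyeq⟩ := hx'
  rw [myCoeEq] at hyeq
  obtain ⟨n, hn⟩ := hyeq
  set w : ℤ := ((c' x).val : ℤ) + n * k with hw
  have hwr : (w : ℝ) = ((c' x).val : ℝ) + (n : ℝ) * k := by
    rw [hw]; push_cast [-ZMod.natCast_val]; ring
  have hwval : (w : ℝ) * (p / k) = y := by
    rw [hwr, hn]; field_simp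
  have hy1 : a < (w:ℝ) * (p/k) := by rw [hwval]; exact hy.1
  have hy2 : (w:ℝ) * (p/k) < a + 1 := by rw [hwval]; exact hy.2
  have hw1 : β < (w:ℝ) := by
    rw [hβ, div_lt_iff₀ hp]
    have := mul_lt_mul_of_pos_right hy1 hk
    calc a * k < (w:ℝ) * (p/k) * k := this
    _ = w * p := by field_simp
  have hw2 : (w:ℝ) < β + d := by
    have h1 : (w:ℝ) * p < (a+1) * k := by
      have := mul_lt_mul_of_pos_right hy2 hk
      calc (w:ℝ) * p = (w:ℝ)*(p/k)*k := by field_simp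
      _ < (a+1)*k := this
    have h2 : (w:ℝ) < (a+1)*k/p := by rw [lt_div_iff₀ hp]; exact h1
    calc (w:ℝ) < (a+1)*k/p := h2
    _ = β + k/p := by rw [hβ]; ring
    _ ≤ β + d := by linarith
  have hfl1 : ⌊β⌋ < w := Int.floor_lt.mpr hw1
  have hfl2 : w ≤ ⌊β⌋ + d := by
    have : w - d ≤ ⌊β⌋ := Int.le_floor.mpr (by push_cast; linarith)
    omega
  set t : ℕ := (w - ⌊β⌋ - 1).toNat with ht
  have htZ : (t:ℤ) = w - ⌊β⌋ - 1 := Int.toNat_of_nonneg (by omega)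
  have htd : t < d := by omega
  have hcx : c' x = ((w : ℤ) : ZMod k) := by
    rw [hw]
    push_cast [-ZMod.natCast_val]
    simp [ZMod.natCast_self, ZMod.natCast_val]
  refine ⟨t, htd, ?_⟩
  rw [hcx]
  have : w = (⌊β⌋ + 1) + (t : ℤ) := by omega
  rw [this]
  push_cast [-ZMod.natCast_val]
  ring
-- C1: from a p-colouring, get a (k,d)-colouring whenever p ≤ k/d
lemma kd_of_real (E : V → V → Prop) {p : ℝ} (hp : 1 ≤ p) {k d : ℕ} (hd : 1 ≤ d)
    (hdk : d ≤ k) (hpk : p ≤ (k : ℝ) / d) (c : V → AddCircle p)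
    (hc : IsAcyclicColouring E p c) :
    ∃ c' : V → ZMod k, IsAcyclicKDColouring E k d c' := by
  classical
  haveI : NeZero k := ⟨by omega⟩
  have hk : 0 < (k : ℝ) := by exact_mod_cast Nat.pos_of_ne_zero (by omega)
  have hdR : 0 < (d : ℝ) := by exact_mod_cast hd
  have hp0 : 0 < p := by linarith
  have hdpk : (d : ℝ) * (p / k) ≤ 1 := by
    rw [le_div_iff₀ hdR] at hpk
    calc (d:ℝ) * (p/k) = d * p / k := by ring
    _ ≤ 1 := by rw [div_le_one hk]; linarith
  choose f hf1 hf2 using fun v => myLift hp0 (c v)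
  set n : V → ℕ := fun v => (⌊f v * k / p⌋).toNat with hn
  refine ⟨fun v => ((n v : ℕ) : ZMod k), ?_⟩
  intro i v l hcyc hall
  -- basic facts about n
  have hnb : ∀ x, (n x : ℝ) ≤ f x * k / p ∧ f x * k / p < n x + 1 ∧ n x < k := by
    intro x
    have h0 : 0 ≤ f x * k / p := by
      have := (hf1 x).1; positivity
    have hfl : ((⌊f x * k / p⌋).toNat : ℤ) = ⌊f x * k / p⌋ := Int.toNat_of_nonneg (Int.floor_nonneg.mpr h0)
    have h1 : (n x : ℝ) ≤ f x * k / p := by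
      rw [hn]
      calc ((⌊f x * k / p⌋).toNat : ℝ) = ((⌊f x * k / p⌋ : ℤ) : ℝ) := by exact_mod_cast congrArg Int.cast hfl
      _ ≤ f x * k / p := Int.floor_le _
    have h2 : f x * k / p < (n x : ℝ) + 1 := by
      simp only [hn]
      have h := Int.lt_floor_add_one (f x * k / p)
      have heq : ((⌊f x * k / p⌋.toNat : ℕ) : ℝ) = ((⌊f x * k / p⌋ : ℤ) : ℝ) := by
        exact_mod_cast hfl
      rw [heq]; exact h
    have h3 : n x < k := by
      have : f x * k / p < k := by
        rw [div_lt_iff₀ hp0]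
        have := (hf1 x).2
        have := mul_lt_mul_of_pos_right this hk
        linarith
      have : (n x : ℝ) < k := lt_of_le_of_lt h1 this
      exact_mod_cast this
    exact ⟨h1, h2, h3⟩
  -- pointwise: good representative g
  have key : ∀ x, ∃ g : ℝ, x ∈ v :: l →
      ((g : AddCircle p) = c x ∧ (i.val : ℝ) * (p/k) ≤ g ∧ g < (i.val : ℝ) * (p/k) + d * (p/k)) := by
    intro x
    by_cases hx : x ∈ v :: l
    · obtain ⟨t, htd, hti⟩ := hall x hx
      -- (n x : ZMod k) = i + t
      have hmod : n x % k = (i.val + t) % k := by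
        have h1 : ((n x : ℕ) : ZMod k) = ((i.val + t : ℕ) : ZMod k) := by
          push_cast
          rw [ZMod.natCast_val, ZMod.cast_id]
          exact hti
        exact (ZMod.natCast_eq_natCast_iff _ _ _).mp h1
      have hnk := (hnb x).2.2
      have hik : i.val < k := ZMod.val_lt i
      have hnx : n x = i.val + t ∨ n x + k = i.val + t := by
        rcases Nat.lt_or_ge (i.val + t) k with h | h
        · left; rw [Nat.mod_eq_of_lt hnk, Nat.mod_eq_of_lt h] at hmod; exact hmod
        · right
          rw [Nat.mod_eq_of_lt hnk, Nat.mod_eq_sub_mod h, Nat.mod_eq_of_lt (by omega)] at hmod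
          omega
      have hb1 := (hnb x).1
      have hb2 := (hnb x).2.1
      have hfg1 : (n x : ℝ) * (p/k) ≤ f x := by
        have := mul_le_mul_of_nonneg_right hb1 (le_of_lt (by positivity : (0:ℝ) < p/k))
        calc (n x : ℝ) * (p/k) ≤ f x * k / p * (p/k) := this
        _ = f x := by field_simp
      have hfg2 : f x < ((n x : ℝ) + 1) * (p/k) := by
        have := mul_lt_mul_of_pos_right hb2 (by positivity : (0:ℝ) < p/k)
        calc f x = f x * k / p * (p/k) := by field_simp
        _ < ((n x:ℝ) + 1) * (p/k) := this
      rcases hnx with h | h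
      · refine ⟨f x, fun _ => ⟨hf2 x, ?_, ?_⟩⟩
        · calc (i.val : ℝ) * (p/k) ≤ (n x : ℝ) * (p/k) := by
                have : (i.val : ℝ) ≤ n x := by exact_mod_cast (by omega : i.val ≤ n x)
                have hpk0 : (0:ℝ) ≤ p/k := by positivity
                nlinarith
          _ ≤ f x := hfg1
        · calc f x < ((n x : ℝ) + 1) * (p/k) := hfg2
          _ ≤ (i.val : ℝ) * (p/k) + d * (p/k) := by
                have : ((n x : ℝ) + 1) ≤ (i.val : ℝ) + d := by
                  have : n x + 1 ≤ i.val + d := by omega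
                  exact_mod_cast this
                have hpk0 : (0:ℝ) ≤ p/k := by positivity
                nlinarith
      · refine ⟨f x + p, fun _ => ⟨?_, ?_, ?_⟩⟩
        · rw [AddCircle.coe_add_period]; exact hf2 x
        · have hkk : ((n x : ℝ) + k) * (p/k) = (n x : ℝ) * (p/k) + p := by field_simp
          calc (i.val : ℝ) * (p/k) ≤ ((n x : ℝ) + k) * (p/k) := by
                have : (i.val : ℝ) ≤ (n x : ℝ) + k := by
                  have : i.val ≤ n x + k := by omega
                  exact_mod_cast this
                have hpk0 : (0:ℝ) ≤ p/k := by positivity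
                nlinarith
          _ = (n x : ℝ) * (p/k) + p := hkk
          _ ≤ f x + p := by linarith [hfg1]
        · calc f x + p < ((n x : ℝ) + 1) * (p/k) + p := by linarith [hfg2]
          _ = ((n x : ℝ) + k + 1) * (p/k) := by field_simp; ring
          _ ≤ (i.val : ℝ) * (p/k) + d * (p/k) := by
                have : ((n x : ℝ) + k + 1) ≤ (i.val : ℝ) + d := by
                  have : n x + k + 1 ≤ i.val + d := by omega
                  exact_mod_cast this
                have hpk0 : (0:ℝ) ≤ p/k := by positivity
                nlinarith
    · exact ⟨0, fun hx' => absurd hx' hx⟩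
  choose g hg using key
  -- take max
  set s : Finset V := (v :: l).toFinset with hs
  have hsne : s.Nonempty := ⟨v, by simp [hs]⟩
  set M : ℝ := s.sup' hsne g with hM
  set L : ℝ := (i.val : ℝ) * (p/k) with hL
  have hML : M < L + 1 := by
    obtain ⟨x₀, hx₀, hMx⟩ := Finset.exists_mem_eq_sup' hsne g
    have hx₀l : x₀ ∈ v :: l := by rwa [hs, List.mem_toFinset] at hx₀
    have := (hg x₀ hx₀l).2.2
    rw [hM, hMx]
    have hdpk' : (d:ℝ) * (p/k) ≤ 1 := hdpk
    linarith
  have hLM : L ≤ M := by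
    obtain ⟨x₀, hx₀, hMx⟩ := Finset.exists_mem_eq_sup' hsne g
    have hx₀l : x₀ ∈ v :: l := by rwa [hs, List.mem_toFinset] at hx₀
    rw [hM, hMx]; exact (hg x₀ hx₀l).2.1
  set a : ℝ := M - 1 + (L + 1 - M)/2 with ha
  refine hc a v l hcyc ?_
  intro x hx
  have hgx := hg x hx
  have hgM : g x ≤ M := Finset.le_sup' g (by rw [hs, List.mem_toFinset]; exact hx)
  refine Set.mem_preimage.mpr ⟨g x, ⟨?_, ?_⟩, hgx.1⟩
  · rw [ha]; linarith [hgx.2.1]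
  · rw [ha]; linarith

open Filter in
lemma limit_colouring [Fintype V] (E : V → V → Prop) {p : ℝ} (hp : 1 ≤ p) (q : ℕ → ℝ)
    (hq1 : ∀ m, p ≤ q m) (hq3 : ∀ m, q m ≤ p + 1)
    (hq2 : Filter.Tendsto q Filter.atTop (nhds p))
    (hcol : ∀ m, ∃ c : V → AddCircle (q m), IsAcyclicColouring E (q m) c) :
    ∃ c : V → AddCircle p, IsAcyclicColouring E p c := by
  classical
  have hp0 : 0 < p := by linarith
  choose c hc using hcol
  have hq0 : ∀ m, 0 < q m := fun m => lt_of_lt_of_le hp0 (hq1 m)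
  choose f hf1 hf2 using fun m v => myLift (hq0 m) (c m v)
  have hmem : ∀ m, f m ∈ Set.pi Set.univ (fun _ : V => Set.Icc (0:ℝ) (p+1)) := by
    intro m v _
    exact ⟨(hf1 m v).1, le_trans (le_of_lt (hf1 m v).2) (hq3 m)⟩
  have hcompact : IsCompact (Set.pi Set.univ fun _ : V => Set.Icc (0:ℝ) (p+1)) :=
    isCompact_univ_pi fun _ => isCompact_Icc
  obtain ⟨A, -, φ, hφ, hconv⟩ := hcompact.tendsto_subseq hmem
  refine ⟨fun v => ((A v : ℝ) : AddCircle p), ?_⟩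
  intro α v l hcyc hall
  have key : ∀ x, ∃ (y : ℝ) (w : ℤ), x ∈ v :: l →
      (y ∈ Set.Ioo α (α + 1) ∧ A x = y + w * p) := by
    intro x
    by_cases hx : x ∈ v :: l
    · have := hall x hx
      simp only [Set.mem_preimage, unitArc, Set.mem_image] at this
      obtain ⟨y, hy, hyeq⟩ := this
      rw [myCoeEq] at hyeq
      obtain ⟨nn, hnn⟩ := hyeq
      exact ⟨y, -nn, fun _ => ⟨hy, by push_cast; linarith⟩⟩
    · exact ⟨0, 0, fun hx' => absurd hx' hx⟩
  choose y w hyw using key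
  set s : Finset V := (v :: l).toFinset with hs
  have hsne : s.Nonempty := ⟨v, by simp [hs]⟩
  have hsmem : ∀ x ∈ s, x ∈ v :: l := fun x hx => by rwa [hs, List.mem_toFinset] at hx
  set Ymin : ℝ := s.inf' hsne y with hYmin
  set Ymax : ℝ := s.sup' hsne y with hYmax
  have hspread : Ymax - Ymin < 1 := by
    obtain ⟨x1, hx1, hx1e⟩ := Finset.exists_mem_eq_sup' hsne y
    obtain ⟨x2, hx2, hx2e⟩ := Finset.exists_mem_eq_inf' hsne y
    have h1 := ((hyw x1 (hsmem x1 hx1)).1 : y x1 ∈ Set.Ioo α (α+1))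
    have h2 := ((hyw x2 (hsmem x2 hx2)).1 : y x2 ∈ Set.Ioo α (α+1))
    rw [hYmax, hYmin, hx1e, hx2e]
    have := h1.2
    have := h2.1
    linarith
  set ε : ℝ := (1 - (Ymax - Ymin))/5 with hε
  have hε0 : 0 < ε := by rw [hε]; linarith
  set W : ℝ := s.sup' hsne (fun x => |(w x : ℝ)|) with hW
  have hWb : ∀ x ∈ s, |(w x : ℝ)| ≤ W := by
    intro x hx
    rw [hW]
    exact Finset.le_sup' (fun x => |(w x : ℝ)|) hx
  have hW0 : 0 ≤ W := le_trans (abs_nonneg _) (hWb v (by simp [hs]))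
  have h1 : ∀ᶠ n in atTop, ∀ x : V, |f (φ n) x - A x| < ε := by
    rw [Filter.eventually_all]
    intro x
    have hcoord : Tendsto (fun n => f (φ n) x) atTop (nhds (A x)) :=
      (tendsto_pi_nhds.mp hconv) x
    exact hcoord.eventually (eventually_abs_sub_lt (A x) hε0)
  have h2 : ∀ᶠ n in atTop, (q (φ n) - p) * W < ε := by
    have hqφ : Tendsto (fun n => q (φ n)) atTop (nhds p) := hq2.comp hφ.tendsto_atTop
    exact ((hqφ.sub tendsto_const_nhds).mul_const W).eventually_lt_const (by simpa using hε0)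
  obtain ⟨n, hn1, hn2⟩ := (h1.and h2).exists
  set m : ℕ := φ n with hm
  refine hc m (Ymin - 2*ε) v l hcyc ?_
  intro x hx
  have hxs : x ∈ s := by rw [hs, List.mem_toFinset]; exact hx
  have hyx := hyw x hx
  have he := abs_lt.mp (hn1 x)
  have hqm1 : 0 ≤ q m - p := by linarith [hq1 m]
  have hwε : |(w x : ℝ) * (q m - p)| < ε := by
    rw [abs_mul, abs_of_nonneg hqm1]
    calc |(w x : ℝ)| * (q m - p) ≤ W * (q m - p) :=
          mul_le_mul_of_nonneg_right (hWb x hxs) hqm1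
    _ = (q m - p) * W := by ring
    _ < ε := hn2
  have hw' := abs_lt.mp hwε
  set u : ℝ := f m x - (w x : ℝ) * q m with hu
  have hucoe : ((u : ℝ) : AddCircle (q m)) = c m x := by
    rw [← hf2 m x, myCoeEq]
    exact ⟨-(w x), by rw [hu]; push_cast; ring⟩
  have hudev : u - y x = (f m x - A x) - (w x : ℝ) * (q m - p) := by
    rw [hu, hyx.2]; ring
  have hymin : Ymin ≤ y x := Finset.inf'_le y hxs
  have hymax : y x ≤ Ymax := Finset.le_sup' y hxs
  refine Set.mem_preimage.mpr ⟨u, ⟨?_, ?_⟩, hucoe⟩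
  · linarith [he.1, hw'.2]
  · linarith [he.2, hw'.1]


lemma seq_facts (p : ℝ) (hp : 1 ≤ p) (m : ℕ) :
    (m + 1 : ℕ) ≤ ⌈p * ((m+1 : ℕ) : ℝ)⌉₊ ∧
    p ≤ ((⌈p * ((m+1 : ℕ) : ℝ)⌉₊ : ℕ) : ℝ) / ((m+1 : ℕ) : ℝ) ∧
    ((⌈p * ((m+1 : ℕ) : ℝ)⌉₊ : ℕ) : ℝ) / ((m+1 : ℕ) : ℝ) ≤ p + 1 / ((m+1 : ℕ) : ℝ) := by
  have hd0 : (0:ℝ) < ((m+1 : ℕ) : ℝ) := by positivity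
  have hnn : (0:ℝ) ≤ p * ((m+1 : ℕ) : ℝ) := by positivity
  have h1 : p * ((m+1 : ℕ) : ℝ) ≤ (⌈p * ((m+1 : ℕ) : ℝ)⌉₊ : ℝ) := Nat.le_ceil _
  have h2 : (⌈p * ((m+1 : ℕ) : ℝ)⌉₊ : ℝ) < p * ((m+1 : ℕ) : ℝ) + 1 := Nat.ceil_lt_add_one hnn
  refine ⟨?_, ?_, ?_⟩
  · have : ((m+1 : ℕ) : ℝ) ≤ (⌈p * ((m+1 : ℕ) : ℝ)⌉₊ : ℝ) := by nlinarith
    exact_mod_cast this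
  · rw [le_div_iff₀ hd0]; linarith
  · rw [div_le_iff₀ hd0]
    have hexp : (p + 1/((m+1 : ℕ) : ℝ)) * ((m+1 : ℕ) : ℝ) = p * ((m+1 : ℕ) : ℝ) + 1 := by
      field_simp
    rw [hexp]
    linarith


/-- acyclic `p`-colourings exist iff acyclic `(k,d)`-colourings exist for
all `k/d ≥ p`; consequently `χ⃗*(D)` is the infimum of such ratios. -/
theorem stmt1 {V : Type*} [Fintype V] [Nonempty V] (E : V → V → Prop)
    (p : ℝ) (hp : 1 ≤ p) :
    ((∃ c : V → AddCircle p, IsAcyclicColouring E p c) ↔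
      (∀ k d : ℕ, 1 ≤ d → d ≤ k → p ≤ (k : ℝ) / d →
        ∃ c : V → ZMod k, IsAcyclicKDColouring E k d c)) ∧
    starDichromatic E =
      sInf {r : ℝ | ∃ k d : ℕ, 1 ≤ d ∧ d ≤ k ∧
        (∃ c : V → ZMod k, IsAcyclicKDColouring E k d c) ∧ r = (k : ℝ) / d} := by
  
  set S := {r : ℝ | ∃ k d : ℕ, 1 ≤ d ∧ d ≤ k ∧
      (∃ c : V → ZMod k, IsAcyclicKDColouring E k d c) ∧ r = (k : ℝ) / d} with hSdef
  set T := {p : ℝ | 1 ≤ p ∧ ∃ c : V → AddCircle p, IsAcyclicColouring E p c} with hTdef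
  have hST : S ⊆ T := by
    rintro r ⟨k, d, hd, hdk, ⟨c', hc'⟩, rfl⟩
    have hd0 : (0:ℝ) < (d : ℝ) := by exact_mod_cast hd
    refine ⟨?_, real_of_kd E hd hdk (le_refl _) c' hc'⟩
    rw [le_div_iff₀ hd0, one_mul]
    exact_mod_cast hdk
  have hTbdd : BddBelow T := ⟨1, fun r hr => hr.1⟩
  have hSbdd : BddBelow S := ⟨1, fun r hr => (hST hr).1⟩
  constructor
  · constructor
    · rintro ⟨c, hc⟩ k d hd hdk hpk
      exact kd_of_real E hp hd hdk hpk c hc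
    · intro h
      refine limit_colouring E hp
        (fun m => ((⌈p * ((m+1 : ℕ) : ℝ)⌉₊ : ℕ) : ℝ) / ((m+1 : ℕ) : ℝ))
        (fun m => (seq_facts p hp m).2.1) (fun m => ?_) ?_ (fun m => ?_)
      · have h3 := (seq_facts p hp m).2.2
        have h4 : 1 / ((m+1 : ℕ) : ℝ) ≤ 1 := by
          rw [div_le_one (by positivity)]
          exact_mod_cast (by omega : 1 ≤ m+1)
        exact le_trans h3 (by linarith)
      · apply tendsto_of_tendsto_of_tendsto_of_le_of_le (g := fun _ : ℕ => p)
          (h := fun m : ℕ => p + 1 / ((m+1 : ℕ) : ℝ))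
          tendsto_const_nhds ?_ (fun m => (seq_facts p hp m).2.1)
          (fun m => (seq_facts p hp m).2.2)
        have heq : (fun m : ℕ => p + 1 / ((m+1 : ℕ) : ℝ))
            = fun m : ℕ => p + 1 / ((m : ℝ) + 1) := by
          funext m; push_cast; ring
        rw [heq]
        have h' := Filter.Tendsto.const_add p tendsto_one_div_add_atTop_nhds_zero_nat
        simpa using h'
      · obtain ⟨c', hc'⟩ := h (⌈p * ((m+1 : ℕ) : ℝ)⌉₊) (m+1) (by omega)
          (seq_facts p hp m).1 (seq_facts p hp m).2.1
        exact real_of_kd E (by omega) (seq_facts p hp m).1 (le_refl _) c' hc'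
  · have hSD : starDichromatic E = sInf T := rfl
    rw [hSD]
    by_cases hSne : S.Nonempty
    · have hTne : T.Nonempty := hSne.mono hST
      apply le_antisymm
      · exact csInf_le_csInf hTbdd hSne hST
      · apply le_csInf hTne
        intro b hb
        refine le_of_forall_pos_le_add ?_
        intro ε hε
        set d : ℕ := ⌈1/ε⌉₊ + 1 with hd
        have hd1 : 1 ≤ d := by omega
        have hd0 : (0:ℝ) < (d : ℝ) := by
          have : 0 < d := hd1
          exact_mod_cast this
        have hεd : 1 / (d : ℝ) ≤ ε := by
          rw [div_le_iff₀ hd0]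
          have h1 : 1/ε ≤ (⌈1/ε⌉₊ : ℝ) := Nat.le_ceil _
          have h2 : ((⌈1/ε⌉₊ : ℕ) : ℝ) ≤ (d : ℝ) := by
            have : ⌈1/ε⌉₊ ≤ d := by omega
            exact_mod_cast this
          have : 1/ε ≤ (d:ℝ) := le_trans h1 h2
          rw [div_le_iff₀ hε] at this
          linarith [mul_comm ε (d:ℝ)]
        set k : ℕ := ⌈b * d⌉₊ with hk
        have hb1 : 1 ≤ b := hb.1
        have hnn : (0:ℝ) ≤ b * d := by positivity
        have h1 : b * d ≤ (k : ℝ) := Nat.le_ceil _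
        have h2 : (k : ℝ) < b * d + 1 := Nat.ceil_lt_add_one hnn
        have hdk : d ≤ k := by
          have : (d:ℝ) ≤ (k:ℝ) := by nlinarith
          exact_mod_cast this
        have hbk : b ≤ (k:ℝ)/d := by rw [le_div_iff₀ hd0]; linarith
        obtain ⟨c, hc⟩ := hb.2
        obtain ⟨c', hc'⟩ := kd_of_real E hb1 hd1 hdk hbk c hc
        have hmem : (k:ℝ)/d ∈ S := ⟨k, d, hd1, hdk, ⟨c', hc'⟩, rfl⟩
        calc sInf S ≤ (k:ℝ)/d := csInf_le hSbdd hmem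
        _ ≤ b + 1/(d:ℝ) := by rw [div_le_iff₀ hd0]; field_simp; linarith
        _ ≤ b + ε := by linarith
    · rw [Set.not_nonempty_iff_eq_empty] at hSne
      have hTe : T = ∅ := by
        rw [Set.eq_empty_iff_forall_notMem]
        intro b hb
        have hb1 : 1 ≤ b := hb.1
        obtain ⟨c, hc⟩ := hb.2
        have hk1 : 1 ≤ ⌈b⌉₊ := by
          have : (1:ℝ) ≤ (⌈b⌉₊ : ℝ) := le_trans hb1 (Nat.le_ceil _)
          exact_mod_cast this
        have hbk : b ≤ ((⌈b⌉₊ : ℕ) : ℝ) / ((1:ℕ) : ℝ) := by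
          simp only [Nat.cast_one, div_one]
          exact Nat.le_ceil _
        obtain ⟨c', hc'⟩ := kd_of_real E hb1 (le_refl 1) hk1 hbk c hc
        have hmem : ((⌈b⌉₊ : ℕ) : ℝ) / ((1:ℕ) : ℝ) ∈ S := ⟨⌈b⌉₊, 1, le_refl 1, hk1, ⟨c', hc'⟩, rfl⟩
        rw [hSne] at hmem
        exact hmem
      rw [hTe, hSne]
end

section
/- For every rational number q ≥ 1 there exists a loopless digraph D with χ⃗*(D) = q; that is, the star dichromatic number attains every rational value q ≥ 1. -/
open Finset

variable {V : Type*}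

/-!
The witness for `q = k / d` is the circulant digraph `C⃗(k,d)` on `ℤ/kℤ`.

Upper bound: colour `i` by `i / d ∈ ℝ/(k/d)ℤ`. Along every arc the colour advances by an amount in
`[1, k/d)`, so inside an open unit arc the lifted colour strictly decreases along arcs and no
directed cycle fits there.

Lower bound: an acyclic set has a sink `u`, and all other vertices of the set then lie in
`u, u+1, …, u+d-1`, so an acyclic set has at most `d` vertices. In an acyclic `p`-colouring, list
the `k` colours around the circle in increasing order: any `d + 1` consecutive ones span an arc of
length at least `1`, and adding up these `k` spans, which wind `d` times around the circle, gives
`k ≤ d p`.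
-/

variable {E : V → V → Prop}

theorem AcyclicOn.mono {A B : Set V} (hB : AcyclicOn E B) (hAB : A ⊆ B) : AcyclicOn E A :=
  fun v l hcyc hA => hB v l hcyc fun x hx => hAB (hA x hx)

theorem acyclicOn_of_potential {β : Type*} [Preorder β] {A : Set V} (φ : V → β)
    (hφ : ∀ u ∈ A, ∀ w ∈ A, E u w → φ w < φ u) : AcyclicOn E A := by
  intro v l hcyc hA
  have hA' : ∀ x ∈ v :: (l ++ [v]), x ∈ A := fun x hx => hA x (by simp at hx ⊢; tauto)
  have hdesc : List.IsChain (fun a b => φ b < φ a) (v :: (l ++ [v])) :=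
    hcyc.2.imp_of_mem_imp fun a b ha hb hab => hφ a (hA' a ha) b (hA' b hb) hab
  rw [List.isChain_iff_pairwise] at hdesc
  exact lt_irrefl _ (List.rel_of_pairwise_cons hdesc (by simp))

/-- If every vertex of `A` had an out-neighbour in `A`, iterating a choice of out-neighbours would
reach a periodic point, whose periodic orbit is a directed cycle inside `A`. -/
theorem AcyclicOn.exists_sink [Finite V] {A : Set V} (hA : AcyclicOn E A) (hne : A.Nonempty) :
    ∃ u ∈ A, ∀ w ∈ A, ¬ E u w := by
  by_contra! hsucc
  choose! f hfA hf using hsucc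
  obtain ⟨x, hx⟩ := hne
  obtain ⟨i, j, hij, hx_eq⟩ : ∃ i j, i < j ∧ f^[i] x = f^[j] x := by
    obtain ⟨i, j, hne, he⟩ := Finite.exists_ne_map_eq_of_infinite fun n => f^[n] x
    rcases hne.lt_or_gt with h | h
    exacts [⟨i, j, h, he⟩, ⟨j, i, h, he.symm⟩]
  set y := f^[i] x
  have hyA : ∀ n, f^[n] y ∈ A := fun n => by
    simpa only [y, ← Function.iterate_add_apply] using Set.MapsTo.iterate hfA (n + i) hx
  have hy : Function.IsPeriodicPt f (j - i) y := by
    rw [Function.IsPeriodicPt, Function.IsFixedPt, ← Function.iterate_add_apply,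
      Nat.sub_add_cancel hij.le, hx_eq]
  have hper : y ∈ Function.periodicPts f := ⟨_, Nat.sub_pos_of_lt hij, hy⟩
  obtain ⟨m, hm⟩ := Nat.exists_eq_add_one_of_ne_zero
    (hy.minimalPeriod_pos (Nat.sub_pos_of_lt hij)).ne'
  set l := (List.range m).map fun n => f^[n + 1] y
  have horbit : Function.periodicOrbit f y = ((y :: l : List V) : Cycle V) := by
    rw [Function.periodicOrbit_def, hm, List.range_succ_eq_map, List.map_cons, List.map_map]
    rfl
  refine hA y l ⟨?_, ?_⟩ fun z hz => ?_
  · rw [← Cycle.nodup_coe_iff, ← horbit]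
    exact Function.nodup_periodicOrbit
  · show List.IsChain E (y :: (l ++ [y]))
    rw [← Cycle.chain_coe_cons, ← horbit, Function.periodicOrbit_chain' E hper]
    exact fun n => by rw [Function.iterate_succ_apply']; exact hf _ (hyA n)
  · rw [← Cycle.mem_coe_iff, ← horbit, Function.mem_periodicOrbit_iff hper] at hz
    obtain ⟨n, rfl⟩ := hz
    exact hyA n

theorem isAcyclicColouring_of_add_ne {p : ℝ} {c : V → AddCircle p}
    (hc : ∀ u w, E u w → ∀ r ∈ Set.Ico (0 : ℝ) 1, c u + r ≠ c w) : IsAcyclicColouring E p c := by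
  intro a
  choose! y hy hyc using fun v (hv : c v ∈ unitArc p a) => hv
  refine acyclicOn_of_potential y fun u hu w hw huw => ?_
  by_contra! hle
  refine hc u w huw (y w - y u) ⟨by linarith, by linarith [(hy u hu).1, (hy w hw).2]⟩ ?_
  rw [← hyc u hu, ← hyc w hw, ← AddCircle.coe_add, add_sub_cancel]

section PeriodicExtension

variable {n : ℕ} [NeZero n]

def periodicExtension (s : Fin n → ℝ) (p : ℝ) (j : ℕ) : ℝ :=
  s (Fin.ofNat n j) + (j / n : ℕ) * p

theorem periodicExtension_add_right (s : Fin n → ℝ) (p : ℝ) (j : ℕ) :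
    periodicExtension s p (j + n) = periodicExtension s p j + p := by
  have hj : Fin.ofNat n (j + n) = Fin.ofNat n j := Fin.ext (by simp)
  simp only [periodicExtension, hj, Nat.add_div_right j (NeZero.pos n)]
  push_cast
  ring

theorem coe_periodicExtension (s : Fin n → ℝ) (p : ℝ) (j : ℕ) :
    (periodicExtension s p j : AddCircle p) = s (Fin.ofNat n j) := by
  rw [periodicExtension, AddCircle.coe_add, ← nsmul_eq_mul, AddCircle.coe_nsmul,
    AddCircle.coe_period, smul_zero, add_zero]

theorem monotone_periodicExtension {s : Fin n → ℝ} (hs : Monotone s) {p : ℝ}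
    (hsp : ∀ i j, s i ≤ s j + p) : Monotone (periodicExtension s p) := by
  refine monotone_nat_of_le_succ fun j => ?_
  have hdm := Nat.div_add_mod j n
  have hdm' := Nat.div_add_mod (j + 1) n
  have hlt := Nat.mod_lt (j + 1) (NeZero.pos n)
  have hlt' := Nat.mod_lt j (NeZero.pos n)
  rw [periodicExtension, periodicExtension, Nat.succ_div]
  split_ifs with hdvd
  · have h0 : Fin.ofNat n (j + 1) = Fin.ofNat n 0 :=
      Fin.ext (by simp [Nat.mod_eq_zero_of_dvd hdvd])
    rw [h0]
    push_cast
    linarith [hsp (Fin.ofNat n j) (Fin.ofNat n 0)]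
  · have hmod : j % n ≤ (j + 1) % n := by
      rw [Nat.succ_div, if_neg hdvd, add_zero] at hdm'
      generalize n * (j / n) = t at hdm hdm'
      omega
    rw [add_zero]
    gcongr
    exact hs (Fin.mk_le_mk.mpr hmod)

end PeriodicExtension

theorem sum_range_add_sub_of_add_eq {n : ℕ} {p : ℝ} {z : ℕ → ℝ}
    (hz : ∀ j, z (j + n) = z j + p) (a : ℕ) : ∑ i ∈ range n, (z (i + a) - z i) = a * p := by
  calc ∑ i ∈ range n, (z (i + a) - z i)
      = ∑ i ∈ range n, ∑ t ∈ range a, (z (i + (t + 1)) - z (i + t)) := by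
        refine sum_congr rfl fun i _ => ?_
        have h := sum_range_sub (fun t => z (i + t)) a
        simp only [add_zero] at h
        rw [h]
    _ = ∑ t ∈ range a, ∑ i ∈ range n, (z (i + t + 1) - z (i + t)) := by
        rw [sum_comm]
        simp only [add_assoc]
    _ = ∑ t ∈ range a, p := by
        refine sum_congr rfl fun t _ => ?_
        have h := sum_range_sub (fun i => z (i + t)) n
        simp only [zero_add, add_right_comm _ 1 t] at h
        rw [h, add_comm n, hz]
        ring
    _ = a * p := by simp

theorem card_le_mul_of_isAcyclicColouring [Fintype V] {p : ℝ} (hp : 1 ≤ p)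
    {c : V → AddCircle p} (hc : IsAcyclicColouring E p c) {α : ℕ}
    (hα : ∀ s : Finset V, AcyclicOn E ↑s → s.card ≤ α) :
    (Fintype.card V : ℝ) ≤ α * p := by
  classical
  set n := Fintype.card V
  rcases le_or_gt n α with hnα | hαn
  · calc (n : ℝ) ≤ α := by exact_mod_cast hnα
      _ ≤ α * p := le_mul_of_one_le_right (Nat.cast_nonneg α) hp
  have : NeZero n := ⟨by omega⟩
  have : Fact (0 < p) := ⟨by linarith⟩
  set x : V → ℝ := fun v => AddCircle.equivIco p 0 (c v)
  have hx : ∀ v, x v ∈ Set.Ico 0 p := fun v => by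
    simpa using (AddCircle.equivIco p 0 (c v)).2
  have hxc : ∀ v, (x v : AddCircle p) = c v := fun v => AddCircle.coe_equivIco
  set e := (Fintype.equivFin V).symm
  set σ := Tuple.sort (x ∘ e)
  -- `z` lists the lifted colours in increasing order, continued periodically
  set w : ℕ → V := fun j => e (σ (Fin.ofNat n j))
  set z := periodicExtension ((x ∘ e) ∘ σ) p
  have hz_mono : Monotone z :=
    monotone_periodicExtension (Tuple.monotone_sort (x ∘ e))
      fun i j => by simp only [Function.comp]; linarith [(hx (e (σ i))).2, (hx (e (σ j))).1]
  have hzc : ∀ j, (z j : AddCircle p) = c (w j) := fun j =>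
    (coe_periodicExtension _ p j).trans (hxc _)
  have hw_inj : ∀ i, Set.InjOn w (Finset.Icc i (i + α)) := by
    intro i j₁ hj₁ j₂ hj₂ h
    have hmod : j₁ ≡ j₂ [MOD n] := by
      simpa [Nat.ModEq] using congrArg Fin.val (σ.injective (e.injective h))
    simp only [coe_Icc, Set.mem_Icc] at hj₁ hj₂
    exact hmod.eq_of_abs_lt (abs_sub_lt_iff.mpr ⟨by omega, by omega⟩)
  have hchord : ∀ i, 1 ≤ z (i + α) - z i := by
    intro i
    by_contra! hlt
    set S := (Finset.Icc i (i + α)).image w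
    have hS : AcyclicOn E ↑S := (hc ((z i + z (i + α) - 1) / 2)).mono fun v hv => by
      obtain ⟨j, hj, rfl⟩ := Finset.mem_image.mp hv
      rw [Finset.mem_Icc] at hj
      refine ⟨z j, ⟨?_, ?_⟩, hzc j⟩
      · linarith [hz_mono hj.1]
      · linarith [hz_mono hj.2]
    have := hα S hS
    rw [Finset.card_image_of_injOn (hw_inj i), Nat.card_Icc] at this
    omega
  calc (n : ℝ) = ∑ i ∈ range n, 1 := by simp
    _ ≤ ∑ i ∈ range n, (z (i + α) - z i) := sum_le_sum fun i _ => hchord i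
    _ = α * p := sum_range_add_sub_of_add_eq (periodicExtension_add_right _ p) α

section Circulant

variable {k d : ℕ} [NeZero k]

theorem circulantDigraph_iff {i j : ZMod k} : circulantDigraph k d i j ↔ d ≤ (j - i).val := by
  constructor
  · rintro ⟨t, hdt, htk, rfl⟩
    rwa [add_sub_cancel_left, ZMod.val_natCast_of_lt htk]
  · exact fun h => ⟨_, h, ZMod.val_lt _, by rw [ZMod.natCast_zmod_val, add_sub_cancel]⟩

theorem circulantDigraph_irrefl (hd : 0 < d) (i : ZMod k) : ¬ circulantDigraph k d i i := by
  rw [circulantDigraph_iff, sub_self, ZMod.val_zero]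
  omega

theorem card_le_of_acyclicOn_circulantDigraph {s : Finset (ZMod k)}
    (hs : AcyclicOn (circulantDigraph k d) ↑s) : s.card ≤ d := by
  classical
  rcases s.eq_empty_or_nonempty with rfl | hne
  · simp
  obtain ⟨u, -, hu⟩ := hs.exists_sink (by exact_mod_cast hne)
  calc s.card ≤ ((range d).image fun t : ℕ => u + t).card := card_le_card fun w hw => by
        refine mem_image.mpr ⟨(w - u).val, ?_, by rw [ZMod.natCast_zmod_val, add_sub_cancel]⟩
        simpa [circulantDigraph_iff] using hu w hw
    _ ≤ d := card_image_le.trans (card_range d).le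
theorem isAcyclicColouring_circulantDigraph (hd : 0 < d) (hdk : d ≤ k) :
    IsAcyclicColouring (circulantDigraph k d) ((k : ℝ) / d)
      fun i => (((i.val : ℝ) / d : ℝ) : AddCircle ((k : ℝ) / d)) := by
  refine isAcyclicColouring_of_add_ne fun u w huw r hr he => ?_
  rw [← AddCircle.coe_add, eq_comm, QuotientAddGroup.eq_iff_sub_mem,
    AddSubgroup.mem_zmultiples_iff] at he
  obtain ⟨m, hm⟩ := he
  set N : ℤ := w.val - u.val - m * k
  have hdR : (0 : ℝ) < d := by exact_mod_cast hd
  have hN : (N : ℝ) = d * r := by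
    rw [zsmul_eq_mul] at hm
    field_simp at hm
    push_cast [N]
    linarith
  have hN0 : 0 ≤ N := by exact_mod_cast hN ▸ mul_nonneg hdR.le hr.1
  have hNd : N < d := by exact_mod_cast hN ▸ mul_lt_of_lt_one_right hdR hr.2
  have hval : ((w - u).val : ℤ) = N := by
    rw [show w - u = ((N : ℤ) : ZMod k) by simp [N], ZMod.val_intCast,
      Int.emod_eq_of_lt hN0 (by omega)]
  rw [circulantDigraph_iff] at huw
  omega

theorem starDichromatic_circulantDigraph {k d : ℕ} [NeZero k] (hd : 0 < d) (hdk : d ≤ k) :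
    starDichromatic (circulantDigraph k d) = k / d := by
  have hdR : (0 : ℝ) < d := by exact_mod_cast hd
  refine IsLeast.csInf_eq ⟨⟨?_, _, isAcyclicColouring_circulantDigraph hd hdk⟩, ?_⟩
  · exact (one_le_div hdR).mpr (by exact_mod_cast hdk)
  · rintro p ⟨hp, c, hc⟩
    have hcard := card_le_mul_of_isAcyclicColouring hp hc
      fun _ hs => card_le_of_acyclicOn_circulantDigraph hs
    rw [ZMod.card] at hcard
    rw [div_le_iff₀ hdR]
    linarith

end Circulant

/-- the star dichromatic number attains every rational `q ≥ 1`. -/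
theorem stmt10 (q : ℚ) (hq : 1 ≤ q) :
    ∃ (n : ℕ) (E : Fin n → Fin n → Prop), 0 < n ∧ (∀ v, ¬ E v v) ∧
      starDichromatic E = (q : ℝ) := by
  have hden : (q.den : ℤ) ≤ q.num := by
    have h : (1 : ℝ) ≤ q.num / q.den := Rat.cast_def (K := ℝ) q ▸ (by exact_mod_cast hq)
    rw [one_le_div (by positivity)] at h
    exact_mod_cast h
  obtain ⟨m, hm⟩ : ∃ m : ℕ, q.num = m + 1 := ⟨q.num.toNat - 1, by have := q.den_pos; omega⟩
  have hq' : (q : ℝ) = ((m + 1 : ℕ) : ℝ) / q.den := by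
    rw [Rat.cast_def, hm]
    push_cast
    rfl
  exact ⟨m + 1, circulantDigraph (m + 1) q.den, m.succ_pos,
    circulantDigraph_irrefl (k := m + 1) q.den_pos,
    hq' ▸ starDichromatic_circulantDigraph (k := m + 1) q.den_pos (by omega)⟩
end

section
/- For every natural number n ≥ 2, the directed cycle C⃗_n on n vertices satisfies χ⃗_f(C⃗_n) = χ⃗*(C⃗_n) = χ⃗_c(C⃗_n) = n/(n−1). -/
open Finset

variable {V : Type*}

/-!
In `C⃗_n` a vertex set is acyclic iff it misses a vertex, since every directed cycle is the
whole cycle. Hence the fractional program is solved by giving weight `1 / (n - 1)` to each of the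
`n` sets `V \ {i}`, and double counting with `|A| ≤ n - 1` gives the matching lower bound.

The colouring `i ↦ i` of `ℤ/nℤ` into `ℝ/(n/(n-1))ℤ` moves every arc forward by exactly `1`, so it
is a weak circular colouring. Every weak circular `p`-colouring is an acyclic `p`-colouring: along
a directed cycle inside an open unit arc the lifted colours can only decrease, so they are
constant. Conversely, in an acyclic `p`-colouring no open unit arc contains all colours, so behind
each colour `c u` there is a colour `c w` at distance in `(0, p - 1 + η]`. Following `u ↦ w`, some
vertex recurs within `n` steps after a full turn of length at least `p`, whence `p ≤ n (p - 1)`.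
-/

namespace ZMod

theorem eq_univ_of_add_one_mem {n : ℕ} [NeZero n] {s : Set (ZMod n)} {v : ZMod n} (hv : v ∈ s)
    (hs : ∀ x ∈ s, x + 1 ∈ s) : s = Set.univ := by
  have hshift : ∀ k : ℕ, v + k ∈ s := by
    intro k
    induction k with
    | zero => simpa using hv
    | succ k ih => simpa [add_assoc] using hs _ ih
  refine Set.eq_univ_of_forall fun x => ?_
  simpa using hshift (x - v).val

end ZMod

section DirectedCycle

variable {n : ℕ} [NeZero n]

theorem mem_of_isDicycle_dirCycle {v : ZMod n} {l : List (ZMod n)} (h : IsDicycle (dirCycle n) v l)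
    (x : ZMod n) : x ∈ v :: l := by
  have hmap : (v :: l).map (· + 1) = l ++ [v] := by
    have := List.forall₂_map_left_iff.mpr
      ((List.isChain_cons_append_singleton_iff_forall₂.mp h.2).imp fun _ _ h => h.symm)
    rwa [List.forall₂_eq_eq_eq] at this
  have hclosed : ∀ y ∈ {y | y ∈ v :: l}, y + 1 ∈ {y | y ∈ v :: l} := by
    intro y hy
    have : y + 1 ∈ l ++ [v] := hmap ▸ List.mem_map_of_mem hy
    simp only [List.mem_append, List.mem_singleton] at this
    simp only [Set.mem_ofPred_eq, List.mem_cons]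
    tauto
  exact Set.eq_univ_iff_forall.mp (ZMod.eq_univ_of_add_one_mem (v := v) (by simp) hclosed) x

theorem exists_isDicycle_dirCycle : ∃ v l, IsDicycle (dirCycle n) v l := by
  obtain ⟨m, rfl⟩ : ∃ m, n = m + 1 := Nat.exists_eq_add_one.mpr (Nat.pos_of_neZero n)
  set l := (List.range m).map (fun t => ((t + 1 : ℕ) : ZMod (m + 1)))
  have hl : 0 :: l = (List.range (m + 1)).map Nat.cast := by simp [l, List.range_succ_eq_map]
  refine ⟨0, l, ?_, ?_⟩
  · rw [hl]
    refine List.Nodup.map_on (fun x hx y hy hxy => ?_) List.nodup_range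
    simp only [List.mem_range] at hx hy
    simpa [ZMod.val_cast_of_lt hx, ZMod.val_cast_of_lt hy] using congrArg ZMod.val hxy
  · have : 0 :: (l ++ [0]) = (List.range (m + 2)).map Nat.cast := by
      rw [← List.cons_append, hl, List.range_succ (n := m + 1), List.map_append]
      simp
    show List.IsChain _ _
    rw [this, List.isChain_map, List.isChain_range_succ]
    intro k _
    simp [dirCycle]

theorem acyclicOn_dirCycle_iff {A : Set (ZMod n)} : AcyclicOn (dirCycle n) A ↔ ∃ x, x ∉ A := by
  constructor
  · intro h
    by_contra! hA
    obtain ⟨v, l, hvl⟩ := exists_isDicycle_dirCycle (n := n)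
    exact h v l hvl fun x _ => hA x
  · rintro ⟨x, hx⟩ v l hvl hA
    exact hx (hA x (mem_of_isDicycle_dirCycle hvl x))

end DirectedCycle

section Fractional

variable [Fintype V] [DecidableEq V]

theorem sum_filter_mem_eq_sum_card_mul (x : Finset V → ℝ) :
    ∑ v : V, ∑ A ∈ univ.filter (fun A : Finset V => v ∈ A), x A = ∑ A : Finset V, #A * x A := by
  simp only [Finset.sum_filter]
  rw [Finset.sum_comm]
  simp [Finset.sum_ite_mem]

theorem sum_ite_erase_eq (S : Finset (Finset V)) (r : ℝ) :
    ∑ A ∈ S, ∑ i : V, (if univ.erase i = A then r else 0) = #{i | univ.erase i ∈ S} * r := by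
  rw [Finset.sum_comm]
  simp [Finset.sum_ite_eq, Finset.sum_ite]

variable {E : V → V → Prop}

theorem fracDichromatic_eq_of_acyclicOn_iff (hV : 2 ≤ Fintype.card V)
    (hE : ∀ A : Set V, AcyclicOn E A ↔ ∃ x, x ∉ A) :
    fracDichromatic E = Fintype.card V / (Fintype.card V - 1) := by
  set N := Fintype.card V
  have hN : (1 : ℝ) < N := by exact_mod_cast hV
  refine IsLeast.csInf_eq ⟨?_, ?_⟩
  · refine ⟨fun A => ∑ i : V, if univ.erase i = A then (N - 1 : ℝ)⁻¹ else 0,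
      fun A => Finset.sum_nonneg fun i _ => ?_, fun A hA => ?_, fun v => ?_, ?_⟩
    · split_ifs
      · exact inv_nonneg.mpr (by linarith)
      · exact le_rfl
    · obtain ⟨i, -, hi⟩ := Finset.exists_ne_zero_of_sum_ne_zero hA
      obtain rfl : univ.erase i = A := by by_contra h; simp [h] at hi
      exact (hE _).mpr ⟨i, by simp⟩
    · have hfilter : ({i | univ.erase i ∈ univ.filter (v ∈ ·)} : Finset V) = univ.erase v := by
        ext i
        simp [eq_comm]
      rw [sum_ite_erase_eq, hfilter, Finset.card_erase_of_mem (Finset.mem_univ v),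
        Finset.card_univ, Nat.cast_sub (by omega), Nat.cast_one, mul_inv_cancel₀ (by linarith)]
    · rw [sum_ite_erase_eq]
      simp [N, div_eq_mul_inv]
  · rintro r ⟨x, hx0, hxA, hcov, rfl⟩
    have hcard : ∀ A : Finset V, #A * x A ≤ (N - 1) * x A := by
      intro A
      by_cases h : x A = 0
      · simp [h]
      obtain ⟨v, hv⟩ := (hE _).mp (hxA A h)
      have : (#A : ℝ) + 1 ≤ N := by exact_mod_cast Finset.card_lt_univ_of_notMem hv
      exact mul_le_mul_of_nonneg_right (by linarith) (hx0 A)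
    have hsum : (N : ℝ) ≤ (N - 1) * ∑ A, x A := calc
      (N : ℝ) = ∑ _v : V, (1 : ℝ) := by simp [N]
      _ ≤ ∑ v : V, ∑ A ∈ univ.filter (fun A : Finset V => v ∈ A), x A :=
        Finset.sum_le_sum fun v _ => hcov v
      _ = ∑ A, #A * x A := sum_filter_mem_eq_sum_card_mul x
      _ ≤ ∑ A, (N - 1) * x A := Finset.sum_le_sum fun A _ => hcard A
      _ = (N - 1) * ∑ A, x A := (Finset.mul_sum ..).symm
    rwa [div_le_iff₀ (by linarith), mul_comm]

end Fractional

section Circle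

variable {p : ℝ}

theorem le_of_weakCircularStep (hp : 1 ≤ p) {s t : ℝ} (hst : t - s < 1)
    (h : (s : AddCircle p) = t ∨
      ∃ r : ℝ, r ∈ Set.Ico (0 : ℝ) p ∧ (r : AddCircle p) = t - s ∧ 1 ≤ r) : t ≤ s := by
  have : Fact (0 < p) := ⟨by linarith⟩
  by_contra! hlt
  rcases h with h | ⟨r, hr, hrts, hr1⟩
  · have h0 : ((t - s : ℝ) : AddCircle p) = 0 := by rw [AddCircle.coe_sub, h, sub_self]
    rw [AddCircle.coe_eq_zero_iff_of_mem_Ico ⟨by linarith, by linarith⟩] at h0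
    linarith
  · have h0 : ((r - (t - s) : ℝ) : AddCircle p) = 0 := by
      rw [AddCircle.coe_sub, AddCircle.coe_sub, hrts, sub_self]
    rw [AddCircle.coe_eq_zero_iff_of_mem_Ico ⟨by linarith, by linarith [hr.2]⟩] at h0
    linarith

theorem equivIco_mem_Ioo_of_mem_unitArc [Fact (0 < p)] (hp : 1 ≤ p) {a : ℝ} {x : AddCircle p}
    (hx : x ∈ unitArc p a) : (AddCircle.equivIco p a x : ℝ) ∈ Set.Ioo a (a + 1) := by
  obtain ⟨t, ht, rfl⟩ := hx
  rwa [AddCircle.equivIco_coe_of_mem ⟨ht.1.le, by linarith [ht.2]⟩]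

theorem exists_coe_eq_of_notMem_unitArc [Fact (0 < p)] {a : ℝ} {x : AddCircle p}
    (hx : x ∉ unitArc p a) : ∃ t ∈ Set.Icc (a + 1 - p) a, (t : AddCircle p) = x := by
  set t := AddCircle.equivIco p (a + 1 - p) x
  refine ⟨t, ⟨t.2.1, ?_⟩, AddCircle.coe_equivIco⟩
  by_contra! hat
  have ht1 : (t : ℝ) < a + 1 := by linarith [t.2.2]
  exact hx ⟨t, ⟨hat, ht1⟩, AddCircle.coe_equivIco⟩

theorem AddCircle.exists_div_card_le_of_coe_eq_sub {ι : Type*} [Fintype ι] [Nonempty ι] {p : ℝ}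
    (hp : 0 < p) (c : ι → AddCircle p) (f : ι → ι) (δ : ι → ℝ) (hδ : ∀ i, 0 < δ i)
    (hf : ∀ i, (δ i : AddCircle p) = c i - c (f i)) : ∃ i, p / Fintype.card ι ≤ δ i := by
  have : Fact (0 < p) := ⟨hp⟩
  by_contra! hsmall
  set N := Fintype.card ι
  obtain ⟨i₀⟩ := ‹Nonempty ι›
  set S : ℕ → ℝ := fun k => ∑ m ∈ Finset.range k, δ (f^[m] i₀)
  have hS : ∀ k, (S k : AddCircle p) = c i₀ - c (f^[k] i₀) := by
    intro k
    induction k with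
    | zero => simp [S]
    | succ k ih =>
      simp only [S, Finset.sum_range_succ, AddCircle.coe_add] at ih ⊢
      rw [ih, hf, Function.iterate_succ_apply']
      abel
  have hreturn : ∀ i j, i < j → j ≤ N → f^[i] i₀ ≠ f^[j] i₀ := by
    intro i j hij hjN heq
    have hpos : 0 < S j - S i := by
      rw [← Finset.sum_Ico_eq_sub _ hij.le]
      exact Finset.sum_pos (fun m _ => hδ _) ⟨i, by simpa using hij⟩
    have hlt : S j - S i < p := calc
      S j - S i = ∑ m ∈ Finset.Ico i j, δ (f^[m] i₀) :=
        (Finset.sum_Ico_eq_sub _ hij.le).symm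
      _ < ∑ m ∈ Finset.Ico i j, p / N :=
        Finset.sum_lt_sum_of_nonempty ⟨i, by simpa using hij⟩ fun m _ => hsmall _
      _ = (j - i : ℕ) * (p / N) := by simp
      _ ≤ N * (p / N) := by
        gcongr
        omega
      _ = p := mul_div_cancel₀ p (by positivity)
    have hzero : ((S j - S i : ℝ) : AddCircle p) = 0 := by
      rw [AddCircle.coe_sub, hS, hS, heq, sub_self]
    rw [AddCircle.coe_eq_zero_iff_of_mem_Ico ⟨hpos.le, hlt⟩] at hzero
    exact hpos.ne' hzero
  obtain ⟨i, j, hij, heq⟩ := Fintype.exists_ne_map_eq_of_card_lt (fun k : Fin (N + 1) => f^[k] i₀)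
    (by simp [N])
  rcases lt_or_gt_of_ne (Fin.val_ne_of_ne hij) with h | h
  · exact hreturn i j h (by omega) heq
  · exact hreturn j i h (by omega) heq.symm

end Circle

section WeakCircular

variable {E : V → V → Prop} {p : ℝ} {c : V → AddCircle p}

theorem IsWeakCircularColouring.isAcyclicColouring (hp : 1 ≤ p)
    (hc : IsWeakCircularColouring E p c) : IsAcyclicColouring E p c := by
  have : Fact (0 < p) := ⟨by linarith⟩
  intro a v l hcyc hA
  set y : V → ℝ := fun x => AddCircle.equivIco p a (c x)
  have hy : ∀ x ∈ v :: l, y x ∈ Set.Ioo a (a + 1) := fun x hx =>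
    equivIco_mem_Ioo_of_mem_unitArc hp (hA x hx)
  have hmem : ∀ x ∈ v :: (l ++ [v]), x ∈ v :: l := by
    simp only [List.mem_cons, List.mem_append]
    tauto
  have hdesc : List.IsChain (fun x x' => y x' ≤ y x) (v :: (l ++ [v])) :=
    hcyc.2.imp_of_mem_imp fun x x' hx hx' hxx' => by
      refine le_of_weakCircularStep hp
        (by linarith [(hy x (hmem x hx)).1, (hy x' (hmem x' hx')).2]) ?_
      simpa only [y, AddCircle.coe_equivIco] using hc.1 x x' hxx'
  have hle : ∀ x ∈ l ++ [v], y x ≤ y v :=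
    hdesc.cons_induction (fun z => y z ≤ y v) _ (fun _ _ h h' => h.trans h') le_rfl
  have hge : ∀ x ∈ v :: (l ++ [v]), y v ≤ y x :=
    hdesc.backwards_cons_induction (fun z => y v ≤ y z) _ (by simp) (fun _ _ h h' => h'.trans h)
      le_rfl
  refine hc.2 (c v) v l hcyc fun x hx => ?_
  have hx' : x ∈ l ++ [v] := by simpa [or_comm] using hx
  have hyx : y x = y v := le_antisymm (hle x hx') (hge x (List.mem_cons_of_mem v hx'))
  simpa [y] using congrArg (fun t : ℝ => (t : AddCircle p)) hyx

end WeakCircular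

section DirectedCycleColourings

variable {n : ℕ} [NeZero n] {p : ℝ}

theorem div_sub_one_le_of_isAcyclicColouring_dirCycle (hn : 2 ≤ n) (hp : 0 < p)
    {c : ZMod n → AddCircle p} (hc : IsAcyclicColouring (dirCycle n) p c) :
    (n : ℝ) / (n - 1) ≤ p := by
  have : Fact (0 < p) := ⟨hp⟩
  have hgap : ∀ η > 0, p / n ≤ p - 1 + η := by
    intro η hη
    -- `c w` is a colour outside the open unit arc starting at distance `η` behind `c u`
    have hback : ∀ u, ∃ w δ, η ≤ δ ∧ δ ≤ p - 1 + η ∧ (δ : AddCircle p) = c u - c w := by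
      intro u
      obtain ⟨s, hs⟩ := QuotientAddGroup.mk_surjective (c u)
      obtain ⟨w, hw⟩ := acyclicOn_dirCycle_iff.mp (hc (s - η))
      obtain ⟨t, ht, htw⟩ := exists_coe_eq_of_notMem_unitArc hw
      exact ⟨w, s - t, by linarith [ht.2], by linarith [ht.1],
        by rw [AddCircle.coe_sub, htw, ← hs]⟩
    choose f δ hlow hup hδ using hback
    obtain ⟨u, hu⟩ := AddCircle.exists_div_card_le_of_coe_eq_sub hp c f δ
      (fun u => hη.trans_le (hlow u)) hδ
    rw [ZMod.card] at hu
    linarith [hup u]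
  have h := le_of_forall_pos_le_add hgap
  have hn1 : (0 : ℝ) < n - 1 := by
    have : (2 : ℝ) ≤ n := by exact_mod_cast hn
    linarith
  rw [div_le_iff₀ (by positivity)] at h
  rw [div_le_iff₀ hn1]
  nlinarith

theorem exists_isWeakCircularColouring_dirCycle (hp : 1 < p) (hn : ((n : ℝ) : AddCircle p) = 0) :
    ∃ c : ZMod n → AddCircle p, IsWeakCircularColouring (dirCycle n) p c := by
  have : Fact (0 < p) := ⟨by linarith⟩
  -- the colouring `i ↦ (i : ℝ)`, well defined on `ℤ/nℤ` because `n ≡ 0` in `ℝ/pℤ`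
  let c : ZMod n →+ AddCircle p :=
    ZMod.lift n ⟨(QuotientAddGroup.mk' _).comp (Int.castAddHom ℝ), by simpa using hn⟩
  have hstep : ∀ u, c (u + 1) - c u = ((1 : ℝ) : AddCircle p) := by
    intro u
    rw [map_add, add_sub_cancel_left, ← Int.cast_one, ZMod.lift_coe]
    simp
  have hne : ∀ u, c (u + 1) ≠ c u := by
    intro u h
    have h1 := hstep u
    rw [h, sub_self, eq_comm, AddCircle.coe_eq_zero_iff_of_mem_Ico ⟨zero_le_one, hp⟩] at h1
    exact one_ne_zero h1
  refine ⟨c, fun u w (huw : w = u + 1) => Or.inr ⟨1, ⟨zero_le_one, hp⟩, ?_, le_rfl⟩, fun t => ?_⟩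
  · rw [huw, hstep]
  · rw [acyclicOn_dirCycle_iff]
    by_cases h0 : c 0 = t
    · exact ⟨1, fun h1 => hne 0 (by simpa [h0] using h1)⟩
    · exact ⟨0, h0⟩

end DirectedCycleColourings

/-- for the directed cycle `C⃗_n`, `n ≥ 2`,
`χ⃗_f = χ⃗* = χ⃗_c = n/(n-1)`. -/
theorem stmt11 (n : ℕ) [NeZero n] (hn : 2 ≤ n) :
    fracDichromatic (dirCycle n) = (n : ℝ) / ((n : ℝ) - 1) ∧
    starDichromatic (dirCycle n) = (n : ℝ) / ((n : ℝ) - 1) ∧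
    circularDichromatic (dirCycle n) = (n : ℝ) / ((n : ℝ) - 1) := by
  have hn2 : (2 : ℝ) ≤ n := by exact_mod_cast hn
  have hq : 1 < (n : ℝ) / (n - 1) := by
    rw [one_lt_div (by linarith)]
    linarith
  have hperiod : ((n : ℝ) : AddCircle ((n : ℝ) / (n - 1))) = 0 :=
    (AddCircle.coe_eq_zero_iff _).mpr ⟨n - 1, by
      rw [zsmul_eq_mul]
      push_cast
      field_simp [show (n : ℝ) - 1 ≠ 0 by linarith]⟩
  obtain ⟨c, hc⟩ := exists_isWeakCircularColouring_dirCycle hq hperiod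
  have hstar : IsLeast {p | 1 ≤ p ∧ ∃ c, IsAcyclicColouring (dirCycle n) p c}
      ((n : ℝ) / (n - 1)) :=
    ⟨⟨hq.le, c, hc.isAcyclicColouring hq.le⟩, fun p ⟨hp, _, hc'⟩ =>
      div_sub_one_le_of_isAcyclicColouring_dirCycle hn (by linarith) hc'⟩
  have hcirc : IsLeast {p | 1 ≤ p ∧ ∃ c, IsWeakCircularColouring (dirCycle n) p c}
      ((n : ℝ) / (n - 1)) :=
    ⟨⟨hq.le, c, hc⟩, fun p ⟨hp, c', hc'⟩ => hstar.2 ⟨hp, c', hc'.isAcyclicColouring hp⟩⟩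
  refine ⟨?_, hstar.csInf_eq, hcirc.csInf_eq⟩
  simpa using fracDichromatic_eq_of_acyclicOn_iff (E := dirCycle n) (by simpa using hn)
    fun _ => acyclicOn_dirCycle_iff
end

section
/- For every real number C > 0 there exists a loopless digraph D with χ⃗*(D) − χ⃗_f(D) = χ⃗_c(D) − χ⃗_f(D) ≥ C; in particular, the star and circular dichromatic numbers can exceed the fractional dichromatic number by an arbitrarily large amount. -/
open Finset

variable {V : Type*}

/-!
For a symmetric digraph a vertex set induces an acyclic subdigraph iff it is independent, so
acyclic `p`-colourings and weak circular `p`-colourings are both exactly the circular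
`p`-colourings of the underlying graph, and the star and circular dichromatic numbers coincide.

The example is the bidirected shift graph on the pairs `i < j` of `N = 2 ^ m` points. Taking
floors of the colours turns a circular `p`-colouring into a proper `⌈p⌉`-colouring, and the sets
of colours seen on the pairs `(i, ·)` are pairwise distinct, so `2 ^ m ≤ 2 ^ ⌈p⌉` and
`p > m - 1`. On the other hand, for each `A ⊆ [N]` the pairs `(i, j)` with `i ∈ A`, `j ∉ A` are
independent, and a pair is of this form for a quarter of all `A`, so the fractional dichromatic
number is at most 4.
-/

namespace AcyclicOn

variable {E : V → V → Prop} {A : Set V}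

theorem of_forall_not_rel (h : ∀ u ∈ A, ∀ w ∈ A, ¬ E u w) : AcyclicOn E A := by
  rintro v (_ | ⟨w, l⟩) ⟨-, hchain⟩ hall
  · exact h v (hall v (by simp)) v (hall v (by simp)) (List.isChain_pair.1 hchain)
  · exact h v (hall v (by simp)) w (hall w (by simp)) (List.isChain_cons_cons.mp hchain).1

theorem false_of_rel_of_rel (h : AcyclicOn E A) {u w : V} (hu : u ∈ A) (hw : w ∈ A)
    (huw : E u w) (hwu : E w u) : False := by
  by_cases hne : u = w
  · subst hne
    exact h u [] ⟨by simp, List.isChain_pair.2 huw⟩ (by simpa using hu)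
  · exact h u [w] ⟨by simpa using hne, .cons_cons huw (List.isChain_pair.2 hwu)⟩
      (by simp [hu, hw])

end AcyclicOn

theorem acyclicOn_iff_of_symmetric {E : V → V → Prop} (hs : ∀ u w, E u w → E w u) {A : Set V} :
    AcyclicOn E A ↔ ∀ u ∈ A, ∀ w ∈ A, ¬ E u w :=
  ⟨fun h u hu w hw huw => h.false_of_rel_of_rel hu hw huw (hs u w huw), .of_forall_not_rel⟩

/-- A circular `p`-colouring of the underlying graph: the colours of the ends of every arc are at
circular distance at least 1. -/
def IsCircularColouring (E : V → V → Prop) (p : ℝ) (c : V → AddCircle p) : Prop :=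
  ∀ u w, E u w → ∀ x ∈ Set.Ioo (-1 : ℝ) 1, (x : AddCircle p) ≠ c w - c u

theorem exists_mem_unitArc_iff {p : ℝ} (s t : AddCircle p) :
    (∃ a, s ∈ unitArc p a ∧ t ∈ unitArc p a) ↔
      ∃ x ∈ Set.Ioo (-1 : ℝ) 1, (x : AddCircle p) = t - s := by
  constructor
  · rintro ⟨a, ⟨y, hy, rfl⟩, ⟨z, hz, rfl⟩⟩
    exact ⟨z - y, ⟨by linarith [hy.2, hz.1], by linarith [hy.1, hz.2]⟩, AddCircle.coe_sub _ z y⟩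
  · rintro ⟨x, hx, hxts⟩
    obtain ⟨y, rfl⟩ := QuotientAddGroup.mk_surjective s
    refine ⟨y + (x - 1) / 2, ⟨y, ⟨by linarith [hx.2], by linarith [hx.1]⟩, rfl⟩,
      ⟨y + x, ⟨by linarith [hx.1], by linarith [hx.2]⟩, ?_⟩⟩
    change ((y + x : ℝ) : AddCircle p) = t
    rw [AddCircle.coe_add, hxts, add_sub_cancel]

section CircularColouring

variable {E : V → V → Prop} {p : ℝ} {c : V → AddCircle p}

theorem isAcyclicColouring_iff_of_symmetric (hs : ∀ u w, E u w → E w u) :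
    IsAcyclicColouring E p c ↔ IsCircularColouring E p c := by
  simp only [IsAcyclicColouring, IsCircularColouring, acyclicOn_iff_of_symmetric hs]
  constructor
  · rintro h u w huw x hx hxc
    obtain ⟨a, hua, hwa⟩ := (exists_mem_unitArc_iff (c u) (c w)).2 ⟨x, hx, hxc⟩
    exact h a u hua w hwa huw
  · rintro h a u hua w hwa huw
    obtain ⟨x, hx, hxc⟩ := (exists_mem_unitArc_iff (c u) (c w)).1 ⟨a, hua, hwa⟩
    exact h u w huw x hx hxc

theorem isWeakCircularColouring_iff_of_symmetric (hs : ∀ u w, E u w → E w u) (hp : 1 ≤ p) :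
    IsWeakCircularColouring E p c ↔ IsCircularColouring E p c := by
  have : Fact (0 < p) := ⟨by linarith⟩
  constructor
  · rintro ⟨harc, hfib⟩
    have hnonneg : ∀ u w, E u w → ∀ x ∈ Set.Ico (0 : ℝ) 1, (x : AddCircle p) ≠ c w - c u := by
      intro u w huw x hx hxc
      rcases harc u w huw with hcuw | ⟨r, hr, hrc, hr1⟩
      · exact (hfib (c u)).false_of_rel_of_rel rfl hcuw.symm huw (hs u w huw)
      · have hxr : x = r := (AddCircle.coe_eq_coe_iff_of_mem_Ico (a := 0)
          ⟨hx.1, by linarith [hx.2]⟩ (by simpa using hr)).1 (hxc.trans hrc.symm)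
        linarith [hx.2]
    intro u w huw x hx hxc
    rcases le_or_gt 0 x with hx0 | hx0
    · exact hnonneg u w huw x ⟨hx0, hx.2⟩ hxc
    · refine hnonneg w u (hs u w huw) (-x) ⟨by linarith, by linarith [hx.1]⟩ ?_
      rw [AddCircle.coe_neg, hxc, neg_sub]
  · intro h
    refine ⟨fun u w huw => Or.inr ?_, fun t => .of_forall_not_rel fun u hu w hw huw => ?_⟩
    · set r := AddCircle.equivIco p 0 (c w - c u)
      refine ⟨r, by simpa using r.2, AddCircle.coe_equivIco, ?_⟩
      by_contra hr
      exact h u w huw r ⟨by linarith [r.2.1], by linarith⟩ AddCircle.coe_equivIco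
    · exact h u w huw 0 ⟨by norm_num, by norm_num⟩ (by simp_all)

theorem starDichromatic_eq_circularDichromatic (hs : ∀ u w, E u w → E w u) :
    starDichromatic E = circularDichromatic E := by
  unfold starDichromatic circularDichromatic
  congr 1
  ext p
  refine and_congr_right fun hp => exists_congr fun c => ?_
  rw [isAcyclicColouring_iff_of_symmetric hs, isWeakCircularColouring_iff_of_symmetric hs hp]

theorem IsCircularColouring.exists_proper_colouring (hp : 0 < p) (hc : IsCircularColouring E p c) :
    ∃ φ : V → Fin ⌈p⌉₊, ∀ u w, E u w → φ u ≠ φ w := by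
  have : Fact (0 < p) := ⟨hp⟩
  let r : V → ℝ := fun v => AddCircle.equivIco p 0 (c v)
  have hr : ∀ v, r v ∈ Set.Ico 0 p := fun v => by simpa using (AddCircle.equivIco p 0 (c v)).2
  refine ⟨fun v => ⟨⌊r v⌋₊, Nat.floor_lt_ceil_of_lt_of_pos (hr v).2 hp⟩, fun u w huw h => ?_⟩
  have hfloor : ⌊r u⌋₊ = ⌊r w⌋₊ := Fin.mk.inj_iff.1 h
  have hu := Nat.floor_le (hr u).1
  have hu' := Nat.lt_floor_add_one (r u)
  have hw := Nat.floor_le (hr w).1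
  have hw' := Nat.lt_floor_add_one (r w)
  rw [hfloor] at hu hu'
  exact hc u w huw (r w - r u) ⟨by linarith, by linarith⟩ (by simp [r])

end CircularColouring

theorem isCircularColouring_natCast {n : ℕ} {E : Fin n → Fin n → Prop} (hE : ∀ v, ¬ E v v) :
    IsCircularColouring E n (fun v => ((v : ℕ) : ℝ)) := by
  intro u w huw x hx hxc
  obtain ⟨k, hk⟩ : ∃ k : ℤ, k • (n : ℝ) = x - ((w : ℕ) - (u : ℕ)) := by
    rw [← AddCircle.coe_eq_zero_iff, AddCircle.coe_sub, AddCircle.coe_sub, hxc, sub_self]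
  have hint : x = ((w : ℤ) - (u : ℤ) + k * n : ℤ) := by push_cast; rw [zsmul_eq_mul] at hk; linarith
  have hzero : (w : ℤ) - (u : ℤ) + k * n = 0 := by
    rw [hint] at hx
    have h1 : (-1 : ℤ) < (w : ℤ) - (u : ℤ) + k * n := by exact_mod_cast hx.1
    have h2 : (w : ℤ) - (u : ℤ) + k * n < 1 := by exact_mod_cast hx.2
    omega
  have hu := u.isLt
  have hw := w.isLt
  have hk0 : k = 0 := by
    rcases lt_trichotomy k 0 with hk | hk | hk
    · nlinarith
    · exact hk
    · nlinarith
  subst hk0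
  have huw' : u = w := Fin.ext (by omega)
  exact hE u (huw' ▸ huw)

theorem card_le_two_pow_of_shift_colouring {α β : Type*} [LinearOrder α] [Fintype α]
    [Fintype β] [DecidableEq β] (φ : α → α → β)
    (hφ : ∀ i j l, i < j → j < l → φ i j ≠ φ j l) :
    Fintype.card α ≤ 2 ^ Fintype.card β := by
  let A : α → Finset β := fun i => ({j | i < j} : Finset α).image (φ i)
  have hA : ∀ i j, i < j → A i ≠ A j := by
    intro i j hij hAij
    have hmem : φ i j ∈ A j := hAij ▸ mem_image_of_mem _ (by simpa using hij)
    obtain ⟨l, hjl, hl⟩ := mem_image.1 hmem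
    exact hφ i j l hij (by simpa using hjl) hl.symm
  have hA_inj : Function.Injective A := by
    intro i j hij
    by_contra hne
    rcases lt_or_gt_of_ne hne with hlt | hlt
    · exact hA i j hlt hij
    · exact hA j i hlt hij.symm
  simpa using Fintype.card_le_of_injective A hA_inj

theorem two_pow_le_card_filter_mem_and_not_mem {α : Type*} [Fintype α] [DecidableEq α]
    {a b : α} (hab : a ≠ b) :
    2 ^ (Fintype.card α - 2) ≤ #{A : Finset α | a ∈ A ∧ b ∉ A} := by
  have hcard : #((univ.erase a).erase b) = Fintype.card α - 2 := by
    rw [card_erase_of_mem (mem_erase.2 ⟨hab.symm, mem_univ b⟩), card_erase_of_mem (mem_univ a),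
      card_univ]
    omega
  rw [← hcard, ← card_powerset]
  refine card_le_card_of_injOn (insert a) (fun S hS => ?_) (fun S hS T hT hST => ?_)
  · have hS : S ⊆ (univ.erase a).erase b := mem_powerset.1 hS
    have hb : b ∉ S := fun h => by simpa using hS h
    simp [hab.symm, hb]
  · have ha : ∀ {S : Finset α}, S ∈ ((univ.erase a).erase b).powerset → a ∉ S :=
      fun hS h => by simpa using mem_powerset.1 hS h
    rw [← erase_insert (ha hS), ← erase_insert (ha hT)]
    exact congrArg (·.erase a) hST

theorem fracDichromatic_le_of_cover [Fintype V] [DecidableEq V] {E : V → V → Prop}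
    {ι : Type*} [Fintype ι] (S : ι → Finset V) (hS : ∀ i, AcyclicOn E (S i)) {m : ℕ}
    (hm : 0 < m) (hcover : ∀ v, m ≤ #{i | v ∈ S i}) :
    fracDichromatic E ≤ Fintype.card ι / m := by
  classical
  let x : Finset V → ℝ := fun B => (∑ i, if S i = B then (1 : ℝ) else 0) / m
  have hx_sum : ∀ T : Finset (Finset V), ∑ B ∈ T, x B = #{i | S i ∈ T} / m := by
    intro T
    simp only [x, ← sum_div, natCast_card_filter]
    rw [sum_comm]
    simp [sum_ite_eq]
  refine csInf_le ⟨0, ?_⟩ ⟨x, fun B => by positivity, fun B hB => ?_, fun v => ?_, ?_⟩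
  · rintro r ⟨y, hy, -, -, rfl⟩
    exact sum_nonneg fun A _ => hy A
  · obtain ⟨i, rfl⟩ : ∃ i, S i = B := by
      by_contra! h
      exact hB (by simp [x, h])
    exact hS i
  · rw [hx_sum, le_div_iff₀ (by positivity), one_mul]
    simpa using hcover v
  · simpa using (hx_sum univ).symm

def ShiftAdj {α : Type*} [LT α] (a b : α × α) : Prop :=
  a.1 < a.2 ∧ b.1 < b.2 ∧ (a.2 = b.1 ∨ b.2 = a.1)

/-- The bidirected shift graph; the pairs `(i, j)` with `i ≥ j` are isolated vertices that only
pad the vertex set to `Fin N × Fin N ≃ Fin (N * N)`. -/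
def shiftDigraph (N : ℕ) (u w : Fin (N * N)) : Prop :=
  ShiftAdj (finProdFinEquiv.symm u) (finProdFinEquiv.symm w)

theorem shiftDigraph_irrefl (N : ℕ) (v : Fin (N * N)) : ¬ shiftDigraph N v v := by
  rintro ⟨h, -, h' | h'⟩ <;> rw [h'] at h <;> exact lt_irrefl _ h

theorem shiftDigraph_symm (N : ℕ) (u w : Fin (N * N)) (h : shiftDigraph N u w) :
    shiftDigraph N w u :=
  ⟨h.2.1, h.1, h.2.2.symm⟩

theorem le_circularDichromatic_shiftDigraph {m N : ℕ} (hN : 2 ^ m ≤ N) :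
    (m : ℝ) - 1 ≤ circularDichromatic (shiftDigraph N) := by
  have hN0 : 0 < N := lt_of_lt_of_le (by positivity) hN
  have hn : (1 : ℝ) ≤ (N * N : ℕ) := by exact_mod_cast Nat.mul_pos hN0 hN0
  refine le_csInf ⟨_, hn, _, (isWeakCircularColouring_iff_of_symmetric (shiftDigraph_symm N) hn).2
    (isCircularColouring_natCast (shiftDigraph_irrefl N))⟩ ?_
  rintro p ⟨hp, c, hc⟩
  rw [isWeakCircularColouring_iff_of_symmetric (shiftDigraph_symm N) hp] at hc
  obtain ⟨φ, hφ⟩ := hc.exists_proper_colouring (by linarith)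
  have hcard : N ≤ 2 ^ ⌈p⌉₊ := by
    simpa using card_le_two_pow_of_shift_colouring (fun i j => φ (finProdFinEquiv (i, j)))
      fun i j l hij hjl => hφ _ _ (by simp [shiftDigraph, ShiftAdj, hij, hjl])
  have hm : m ≤ ⌈p⌉₊ := (Nat.pow_le_pow_iff_right (by norm_num)).1 (hN.trans hcard)
  have hceil : (⌈p⌉₊ : ℝ) < p + 1 := Nat.ceil_lt_add_one (by linarith)
  have : (m : ℝ) ≤ ⌈p⌉₊ := by exact_mod_cast hm
  linarith

theorem fracDichromatic_shiftDigraph_le_four {N : ℕ} (hN : 2 ≤ N) :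
    fracDichromatic (shiftDigraph N) ≤ 4 := by
  let e : Fin (N * N) ≃ Fin N × Fin N := finProdFinEquiv.symm
  let S : Finset (Fin N) → Finset (Fin (N * N)) := fun A =>
    {v | (e v).1 < (e v).2 → (e v).1 ∈ A ∧ (e v).2 ∉ A}
  have hS : ∀ A, AcyclicOn (shiftDigraph N) (S A) := by
    refine fun A => .of_forall_not_rel fun u hu w hw ⟨hu', hw', h⟩ => ?_
    simp only [S, coe_filter, mem_univ, true_and, Set.mem_ofPred_eq] at hu hw
    rcases h with h | h
    · exact (hu hu').2 (h ▸ (hw hw').1)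
    · exact (hw hw').2 (h ▸ (hu hu').1)
  have hcover : ∀ v, 2 ^ (N - 2) ≤ #{A | v ∈ S A} := by
    intro v
    by_cases hv : (e v).1 < (e v).2
    · simpa [S, hv] using two_pow_le_card_filter_mem_and_not_mem hv.ne
    · simpa [S, hv] using Nat.pow_le_pow_right two_pos (Nat.sub_le N 2)
  obtain ⟨k, rfl⟩ : ∃ k, N = k + 2 := ⟨N - 2, by omega⟩
  calc fracDichromatic (shiftDigraph (k + 2))
      ≤ (Fintype.card (Finset (Fin (k + 2))) : ℝ) / (2 ^ (k + 2 - 2) : ℕ) :=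
        fracDichromatic_le_of_cover S hS (by positivity) hcover
    _ = 4 := by
      rw [Fintype.card_finset, Fintype.card_fin, Nat.add_sub_cancel, pow_add]
      push_cast
      field_simp

theorem stmt12_general (C : ℝ) :
    ∃ (n : ℕ) (E : Fin n → Fin n → Prop), 0 < n ∧ (∀ v, ¬ E v v) ∧
      starDichromatic E - fracDichromatic E
        = circularDichromatic E - fracDichromatic E ∧
      C ≤ circularDichromatic E - fracDichromatic E := by
  set m := ⌈C⌉₊ + 5
  refine ⟨2 ^ m * 2 ^ m, shiftDigraph (2 ^ m), by positivity, shiftDigraph_irrefl _,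
    by rw [starDichromatic_eq_circularDichromatic (shiftDigraph_symm _)], ?_⟩
  have hcirc := le_circularDichromatic_shiftDigraph (m := m) le_rfl
  have hfrac := fracDichromatic_shiftDigraph_le_four (N := 2 ^ m)
    (le_self_pow₀ one_le_two (by omega))
  have hC : C ≤ ⌈C⌉₊ := Nat.le_ceil C
  push_cast [m] at hcirc
  linarith

/-- star and circular dichromatic number can exceed the fractional
dichromatic number by an arbitrarily large amount. -/
theorem stmt12 (C : ℝ) (hC : 0 < C) :
    ∃ (n : ℕ) (E : Fin n → Fin n → Prop), 0 < n ∧ (∀ v, ¬ E v v) ∧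
      starDichromatic E - fracDichromatic E
        = circularDichromatic E - fracDichromatic E ∧
      C ≤ circularDichromatic E - fracDichromatic E :=
  stmt12_general C
end

section
/- Let D be a loopless digraph and let D^s be the digraph obtained from D by adding one new vertex s together with an arc (s,v) for every v ∈ V(D) (so s is a dominating source). Then χ⃗_c(D^s) = χ⃗(D), the dichromatic number of D. -/
open Finset

variable {V : Type*}

/-!
Colouring `D` with `k = χ⃗(D)` acyclic classes `0, …, k-1` and the source with `0` gives a weak
circular `k`-colouring of `D^s`. Conversely, in a weak circular `p`-colouring `c` of `D^s` every
vertex `v` of `D` lifts its colour to `ρ v ∈ [1, p]` with `ρ v ≡ c v - c s`. Grouping the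
vertices by `⌊ρ v⌋ ∈ {1, …, ⌊p⌋}` gives `⌊p⌋` classes; within a class `ρ` cannot increase along
an arc, so it is constant on any directed cycle of the class, which would then lie in a single
fibre of `c`.
-/

open Set

namespace AddCircle

variable {𝕜 : Type*} [AddCommGroup 𝕜] [LinearOrder 𝕜] [IsOrderedAddMonoid 𝕜] [Archimedean 𝕜]

theorem coe_eq_coe_iff_of_abs_sub_lt {p x y : 𝕜} (hxy : |x - y| < p) :
    (x : AddCircle p) = y ↔ x = y := by
  have : Fact (0 < p) := ⟨(abs_nonneg _).trans_lt hxy⟩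
  obtain ⟨hyx, hxy⟩ := abs_sub_lt_iff.1 hxy
  rcases le_total x y with h | h
  · exact coe_eq_coe_iff_of_mem_Ico (a := x) ⟨le_rfl, lt_add_of_pos_right x this.out⟩
      ⟨h, sub_lt_iff_lt_add'.1 hxy⟩
  · exact coe_eq_coe_iff_of_mem_Ico (a := y) ⟨h, sub_lt_iff_lt_add'.1 hyx⟩
      ⟨le_rfl, lt_add_of_pos_right y this.out⟩

end AddCircle

section WeakArc

open AddCircle

theorem natCast_coe_inj {k i j : ℕ} (hi : i < k) (hj : j < k) :
    ((i : ℝ) : AddCircle (k : ℝ)) = (j : ℝ) ↔ i = j := by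
  have hi' : (i : ℝ) < k := by exact_mod_cast hi
  have hj' : (j : ℝ) < k := by exact_mod_cast hj
  rw [coe_eq_coe_iff_of_abs_sub_lt (abs_sub_lt_iff.2 ⟨by linarith, by linarith⟩), Nat.cast_inj]

theorem natCast_weakArc {k i j : ℕ} (hi : i < k) (hj : j < k) :
    ((i : ℝ) : AddCircle (k : ℝ)) = (j : ℝ) ∨
      ∃ r ∈ Ico (0 : ℝ) k, (r : AddCircle (k : ℝ)) = (j : ℝ) - (i : ℝ) ∧ 1 ≤ r := by
  rcases lt_trichotomy i j with hij | rfl | hji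
  · have : (i : ℝ) + 1 ≤ j := by exact_mod_cast hij
    have hj' : (j : ℝ) < k := by exact_mod_cast hj
    exact Or.inr ⟨j - i, ⟨by linarith, by linarith [(i.cast_nonneg : (0 : ℝ) ≤ i)]⟩,
      AddCircle.coe_sub _ _ _, by linarith⟩
  · exact Or.inl rfl
  · have : (j : ℝ) + 1 ≤ i := by exact_mod_cast hji
    have hi' : (i : ℝ) + 1 ≤ k := by exact_mod_cast hi
    refine Or.inr ⟨j - i + k, ⟨by linarith, by linarith⟩, ?_, by
      linarith [(j.cast_nonneg : (0 : ℝ) ≤ j)]⟩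
    rw [coe_add_period, AddCircle.coe_sub]

/-- In a window of width `1`, a step allowed in a weak circular colouring never goes up. -/
theorem le_of_weakArc {p x y : ℝ} (hp : 1 ≤ p) (hxy : |y - x| < 1)
    (h : (x : AddCircle p) = y ∨ ∃ r ∈ Ico (0 : ℝ) p, (r : AddCircle p) = y - x ∧ 1 ≤ r) :
    y ≤ x := by
  obtain ⟨hyx, hxy⟩ := abs_sub_lt_iff.1 hxy
  rcases h with h | ⟨r, ⟨-, hrp⟩, hr, hr1⟩
  · exact ((coe_eq_coe_iff_of_abs_sub_lt (abs_sub_lt_iff.2 ⟨by linarith, by linarith⟩)).1 h).ge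
  · have hr' : ((r - p : ℝ) : AddCircle p) = ((y - x : ℝ) : AddCircle p) := by
      rw [AddCircle.coe_sub, coe_period, sub_zero, hr, AddCircle.coe_sub]
    have := (coe_eq_coe_iff_of_abs_sub_lt (abs_sub_lt_iff.2 ⟨by linarith, by linarith⟩)).1 hr'
    linarith

end WeakArc

section Dicycle

variable {V : Type*} {E : V → V → Prop}

theorem IsDicycle.eq_of_antitoneOn {α : Type*} [PartialOrder α] {f : V → α} {A : Set V}
    {v : V} {l : List V} (hc : IsDicycle E v l) (hA : ∀ x ∈ v :: l, x ∈ A)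
    (hf : ∀ a ∈ A, ∀ b ∈ A, E a b → f b ≤ f a) : ∀ x ∈ v :: l, f x = f v := by
  have hmem : ∀ x ∈ v :: (l ++ [v]), x ∈ A := fun x hx => hA x (by simp at hx ⊢; tauto)
  have hchain : Cycle.Chain (f ⁻¹'o (· ≥ ·)) (v :: l : Cycle V) :=
    hc.2.imp_of_mem_imp fun a b ha hb hab => hf a (hmem a ha) b (hmem b hb) hab
  intro x hx
  rw [Cycle.chain_iff_pairwise] at hchain
  have hxc : x ∈ (v :: l : Cycle V) := by simpa using hx
  have hvc : v ∈ (v :: l : Cycle V) := by simp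
  exact le_antisymm (hchain v hvc x hxc) (hchain x hxc v hvc)

theorem isDicycle_addSource_some {v : V} {l : List V} :
    IsDicycle (addSource E) (some v) (l.map some) ↔ IsDicycle E v l := by
  have hchain := List.isChain_map (R := addSource E) some (l := v :: (l ++ [v]))
  simp only [List.map_cons, List.map_append, List.map_nil] at hchain
  exact and_congr (List.nodup_map_iff (l := v :: l) (Option.some_injective V)) hchain

/-- The source has no in-arcs, so it lies on no directed cycle. -/
theorem IsDicycle.exists_eq_map_some {v : Option V} {l : List (Option V)}
    (hc : IsDicycle (addSource E) v l) :
    ∃ (v₀ : V) (l₀ : List V), v = some v₀ ∧ l = l₀.map some := by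
  have : IsTrans (Option V) (fun _ b => b ≠ none) := ⟨fun _ _ _ _ h => h⟩
  have hchain : Cycle.Chain (fun _ b => b ≠ none) (v :: l : Cycle (Option V)) :=
    List.IsChain.imp (fun a b hab => by rintro rfl; cases a <;> exact hab) hc.2
  have hsome : ∀ x ∈ v :: l, x ∈ range some := fun x hx => Option.ne_none_iff_exists.1 <|
    Cycle.chain_iff_pairwise.1 hchain v (by simp) x (by simpa using hx)
  obtain ⟨v₀, rfl⟩ := hsome v List.mem_cons_self
  obtain ⟨l₀, rfl⟩ : l ∈ range (List.map some) := by
    rw [Set.range_list_map]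
    exact fun x hx => hsome x (List.mem_cons_of_mem _ hx)
  exact ⟨v₀, l₀, rfl, rfl⟩

theorem acyclicOn_addSource_iff {A : Set (Option V)} :
    AcyclicOn (addSource E) A ↔ AcyclicOn E (some ⁻¹' A) := by
  constructor
  · intro h v l hc hall
    exact h (some v) (l.map some) (isDicycle_addSource_some.2 hc) (by simpa using hall)
  · intro h v l hc hall
    obtain ⟨v, l, rfl, rfl⟩ := hc.exists_eq_map_some
    exact h v l (isDicycle_addSource_some.1 hc) (by simpa using hall)

end Dicycle

section Colouring

variable {V : Type*} {E : V → V → Prop}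

theorem isWeakCircularColouring_addSource {k : ℕ} {c₀ : V → Fin k}
    (hc₀ : ∀ i, AcyclicOn E (c₀ ⁻¹' {i})) :
    IsWeakCircularColouring (addSource E) k
      (fun o => (((o.elim 0 fun v => (c₀ v : ℕ) : ℕ) : ℝ) : AddCircle (k : ℝ))) := by
  refine ⟨?_, fun t => acyclicOn_addSource_iff.2 fun v l hc hall => ?_⟩
  · rintro (_ | u) (_ | w) huw
    · exact huw.elim
    · exact natCast_weakArc (c₀ w).pos (c₀ w).isLt
    · exact huw.elim
    · exact natCast_weakArc (c₀ u).isLt (c₀ w).isLt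
  · refine hc₀ (c₀ v) v l hc fun x hx => Fin.ext ?_
    exact (natCast_coe_inj (c₀ x).isLt (c₀ v).isLt).1
      ((hall x hx).trans (hall v List.mem_cons_self).symm)

theorem exists_finColouring_of_isWeakCircularColouring_addSource {p : ℝ} (hp : 1 ≤ p)
    {c : Option V → AddCircle p} (hc : IsWeakCircularColouring (addSource E) p c) :
    ∃ g : V → Fin ⌊p⌋₊, ∀ i, AcyclicOn E (g ⁻¹' {i}) := by
  have hlift : ∀ v, ∃ r ∈ Icc 1 p, (r : AddCircle p) = c (some v) - c none := by
    intro v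
    rcases hc.1 none (some v) trivial with h | ⟨r, hr, hrc, hr1⟩
    · exact ⟨p, ⟨hp, le_rfl⟩, by rw [AddCircle.coe_period, h, sub_self]⟩
    · exact ⟨r, ⟨hr1, hr.2.le⟩, hrc⟩
  choose ρ hρ hρc using hlift
  have hc_eq : ∀ v, c (some v) = ρ v + c none := fun v => sub_eq_iff_eq_add.1 (hρc v).symm
  have hρ0 : ∀ v, 0 ≤ ρ v := fun v => zero_le_one.trans (hρ v).1
  have hfloor : ∀ v, 1 ≤ ⌊ρ v⌋₊ ∧ ⌊ρ v⌋₊ ≤ ⌊p⌋₊ := fun v =>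
    ⟨(Nat.one_le_floor_iff _).2 (hρ v).1, Nat.floor_le_floor (hρ v).2⟩
  let g : V → Fin ⌊p⌋₊ := fun v => ⟨⌊ρ v⌋₊ - 1, by have := hfloor v; omega⟩
  refine ⟨g, fun i v l hcyc hall => ?_⟩
  have hanti : ∀ a ∈ g ⁻¹' {i}, ∀ b ∈ g ⁻¹' {i}, E a b → ρ b ≤ ρ a := by
    intro a ha b hb hab
    have hg : ⌊ρ a⌋₊ - 1 = ⌊ρ b⌋₊ - 1 := congrArg Fin.val (ha.trans hb.symm)
    have hab_floor : ⌊ρ b⌋₊ = ⌊ρ a⌋₊ := by have := hfloor a; have := hfloor b; omega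
    have hwin : |ρ b - ρ a| < 1 := Int.abs_sub_lt_one_of_floor_eq_floor <| by
      rw [← Int.natCast_floor_eq_floor (hρ0 a), ← Int.natCast_floor_eq_floor (hρ0 b), hab_floor]
    have hstep := hc.1 (some a) (some b) hab
    rw [hc_eq a, hc_eq b, add_left_inj, add_sub_add_right_eq_sub] at hstep
    exact le_of_weakArc hp hwin hstep
  have hconst := hcyc.eq_of_antitoneOn hall hanti
  refine acyclicOn_addSource_iff.1 (hc.2 (c (some v))) v l hcyc fun x hx => ?_
  change c (some x) = c (some v)
  rw [hc_eq, hc_eq, hconst x hx]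

end Colouring

theorem stmt14_general {V : Type*} [Nonempty V] (E : V → V → Prop) :
    circularDichromatic (addSource E) = (dichromatic E : ℝ) := by
  obtain hT | hT :=
    Set.eq_empty_or_nonempty {k : ℕ | ∃ c : V → Fin k, ∀ i : Fin k, AcyclicOn E (c ⁻¹' {i})}
  · -- both infima are then taken over `∅`, so both sides are the junk value `0`
    have hS : {p : ℝ | 1 ≤ p ∧
        ∃ c : Option V → AddCircle p, IsWeakCircularColouring (addSource E) p c} = ∅ :=
      eq_empty_of_forall_notMem fun p ⟨hp, _, hc⟩ =>
        hT.subset (exists_finColouring_of_isWeakCircularColouring_addSource hp hc)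
    rw [circularDichromatic, dichromatic, hS, hT, Real.sInf_empty, Nat.sInf_empty, Nat.cast_zero]
  · obtain ⟨c₀, hc₀⟩ := Nat.sInf_mem hT
    have hk : (1 : ℝ) ≤ dichromatic E := Nat.one_le_cast.2 (c₀ (Classical.arbitrary V)).pos
    refine IsLeast.csInf_eq ⟨⟨hk, _, isWeakCircularColouring_addSource hc₀⟩, ?_⟩
    rintro p ⟨hp, _, hc⟩
    obtain ⟨g, hg⟩ := exists_finColouring_of_isWeakCircularColouring_addSource hp hc
    calc (dichromatic E : ℝ) ≤ ⌊p⌋₊ := Nat.cast_le.2 (Nat.sInf_le ⟨g, hg⟩)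
      _ ≤ p := Nat.floor_le (zero_le_one.trans hp)

/-- adding a dominating source makes the circular dichromatic number
equal to the dichromatic number: `χ⃗_c(D^s) = χ⃗(D)`. -/
theorem stmt14 {V : Type*} [Fintype V] [Nonempty V] (E : V → V → Prop)
    (hE : ∀ v, ¬ E v v) :
    circularDichromatic (addSource E) = (dichromatic E : ℝ) :=
  stmt14_general E
end
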